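/- arXiv:2605.14345 — 9 statements merged into one kernel-verified Lean document; each statement's English description precedes it below -/
import Mathlib

section
/- Let X ⊂ ℝⁿ be compact and let (x_k)_{k∈ℕ} be a sequence contained in X. Suppose there exists a continuous function L : X → ℝ such that limsup_{k₁,k₂→∞, k₁<k₂} [ diam(x_{⟦k₁,k₂⟧}) + L(x_{k₂}) − L(x_{k₁}) ] ≤ 0, i.e., for every ε > 0 there exists K ∈ ℕ such that for all k₁, k₂ with K ≤ k₁ < k₂ one has diam(x_{⟦k₁,k₂⟧}) + L(x_{k₂}) − L(x_{k₁}) ≤ ε. Then the sequence (x_k)_{k∈ℕ} converges. -/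
open Filter

/-- If a bounded sequence in a compact set `X ⊂ ℝⁿ` satisfies the
diameter criterion with respect to a continuous function `L : X → ℝ`, then it converges. -/
theorem diameter_criterion_convergence {n : ℕ}
    (X : Set (EuclideanSpace ℝ (Fin n))) (hX : IsCompact X)
    (x : ℕ → EuclideanSpace ℝ (Fin n)) (hx : ∀ k, x k ∈ X)
    (L : EuclideanSpace ℝ (Fin n) → ℝ) (hL : ContinuousOn L X)
    (hcrit : ∀ ε > 0, ∃ K : ℕ, ∀ k₁ k₂ : ℕ, K ≤ k₁ → k₁ < k₂ →
      Metric.diam (x '' Set.Icc k₁ k₂) + L (x k₂) - L (x k₁) ≤ ε) :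
    ∃ p, Tendsto x atTop (nhds p) := by
  -- L is bounded below on X
  obtain ⟨z, hzX, hzmin⟩ := hX.exists_isMinOn ⟨x 0, hx 0⟩ hL
  have hlb : ∀ k, L z ≤ L (x k) := fun k => hzmin (hx k)
  -- x is Cauchy
  have hC : CauchySeq x := by
    rw [Metric.cauchySeq_iff]
    intro ε hε
    obtain ⟨K, hK⟩ := hcrit (ε / 3) (by linarith)
    -- infimum of L (x (K+k))
    set m : ℝ := ⨅ k : ℕ, L (x (K + k)) with hm
    have hbdd : BddBelow (Set.range fun k : ℕ => L (x (K + k))) :=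
      ⟨L z, by rintro _ ⟨k, rfl⟩; exact hlb _⟩
    have hexists : ∃ k : ℕ, L (x (K + k)) < m + ε / 3 := by
      apply exists_lt_of_ciInf_lt
      linarith [hm ▸ le_refl m]
    obtain ⟨k, hk⟩ := hexists
    refine ⟨K + k, fun i hi j hj => ?_⟩
    rcases eq_or_ne i j with rfl | hij
    · simpa using hε
    · set k₁ := K + k
      set k₂ := max i j
      have hk₂ : k₁ < k₂ := by
        rcases max_cases i j with ⟨h1, h2⟩ | ⟨h1, h2⟩ <;> omega
      have hdiam := hK k₁ k₂ (Nat.le_add_right K k) hk₂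
      have hKk₂ : K ≤ k₂ := le_of_lt (lt_of_le_of_lt (Nat.le_add_right K k) hk₂)
      have hmle : m ≤ L (x k₂) := by
        have heq : K + (k₂ - K) = k₂ := by omega
        have : L (x (K + (k₂ - K))) = L (x k₂) := by rw [heq]
        calc m ≤ L (x (K + (k₂ - K))) := ciInf_le hbdd _
          _ = L (x k₂) := this
      have hdiam2 : Metric.diam (x '' Set.Icc k₁ k₂) < ε := by
        have : L (x k₁) < m + ε / 3 := hk
        linarith
      have hbdd2 : Bornology.IsBounded (x '' Set.Icc k₁ k₂) :=
        ((Set.finite_Icc k₁ k₂).image x).isBounded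
      have hmemi : x i ∈ x '' Set.Icc k₁ k₂ :=
        ⟨i, ⟨hi, le_max_left i j⟩, rfl⟩
      have hmemj : x j ∈ x '' Set.Icc k₁ k₂ :=
        ⟨j, ⟨hj, le_max_right i j⟩, rfl⟩
      exact lt_of_le_of_lt (Metric.dist_le_diam_of_mem hbdd2 hmemi hmemj) hdiam2
  exact cauchySeq_tendsto_of_complete hC
end

section
/- Let F : ℝⁿ × [0,∞) → Set ℝⁿ be a set-valued map and let (x_k)_{k∈ℕ} ⊂ ℝⁿ, (α_k)_{k∈ℕ} ⊂ (0,∞), (e_k)_{k∈ℕ} ⊂ ℝⁿ, and (w_k)_{k∈ℕ} satisfy w_k ∈ F(x_k, α_k) and x_{k+1} = x_k + w_k + e_k for all k. Assume: (i) α_k → ᾱ for some ᾱ ≥ 0; (ii) Σ_{k=0}^∞ α_k = ∞; (iii) (Σ_{k=0}^N e_k)/(Σ_{k=0}^N α_k) → 0 as N → ∞; (iv) x_k → x*; and (v) the map (y,α) ↦ F(y,α)/α is locally bounded near (x*, ᾱ), i.e., there exist r > 0 and M > 0 such that for all y with |y − x*| ≤ r, all α > 0 with |α − ᾱ| ≤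 r, and all v ∈ F(y,α), one has |v|/α ≤ M. Define G := { v ∈ ℝⁿ : there exist sequences (y_j, α_j) → (x*, ᾱ) with α_j > 0 and u_j ∈ F(y_j, α_j) such that u_j/α_j → v }. Then 0 belongs to the convex hull of G. -/
/-!
Average the recursion: telescoping and the noise assumption show that the `α`-weighted means
of the scaled updates `v k = (α k)⁻¹ • w k` tend to `0`. Local boundedness keeps `v` eventually
in a compact ball, so its cluster points form a compact subset of `G` whose convex hull is
compact (Carathéodory). If `0` were outside that hull, a separating functional `f` with
`f > c > 0` on the hull would be `> c` on all late `v k`, and then the weighted means of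
`f (v k)` could not tend to `f 0 = 0`.
-/

open Filter Finset

theorem isCompact_convexHull {E : Type*} [AddCommGroup E] [Module ℝ E] [TopologicalSpace E]
    [ContinuousAdd E] [ContinuousSMul ℝ E] [FiniteDimensional ℝ E] {s : Set E}
    (hs : IsCompact s) : IsCompact (convexHull ℝ s) := by
  rcases s.eq_empty_or_nonempty with rfl | ⟨z₀, hz₀⟩
  · simp
  set m := Module.finrank ℝ E + 1
  let Φ : (Fin m → ℝ) × (Fin m → E) → E := fun p => ∑ i, p.1 i • p.2 i
  suffices h : convexHull ℝ s = Φ '' (stdSimplex ℝ (Fin m) ×ˢ Set.univ.pi fun _ => s) by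
    rw [h]
    exact ((isCompact_stdSimplex ℝ _).prod (isCompact_univ_pi fun _ => hs)).image (by fun_prop)
  refine Set.Subset.antisymm (fun q hq => ?_) ?_
  · obtain ⟨ι, _, z, w, hzs, hz, hw0, hw1, rfl⟩ := eq_pos_convex_span_of_mem_convexHull hq
    have hcard : Fintype.card ι ≤ Fintype.card (Fin m) := by
      simpa [m] using hz.card_le_finrank_succ.trans (Nat.succ_le_succ (Submodule.finrank_le _))
    obtain ⟨e⟩ := Function.Embedding.nonempty_of_card_le hcard
    classical
    -- pad the Carathéodory combination with zero weights on a fixed point of `s`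
    refine ⟨(Function.extend e w 0, Function.extend e z fun _ => z₀), ⟨⟨fun j => ?_, ?_⟩,
      fun j _ => ?_⟩, ?_⟩
    · by_cases hj : j ∈ Set.range e
      · obtain ⟨i, rfl⟩ := hj
        simpa [e.injective.extend_apply] using (hw0 i).le
      · simp [Function.extend_apply' _ _ _ hj]
    · rw [← hw1]
      exact (Fintype.sum_of_injective e e.injective _ _
        (fun j hj => by simp [Function.extend_apply' _ _ _ hj])
        (fun i => (e.injective.extend_apply _ _ _).symm)).symm
    · by_cases hj : j ∈ Set.range e
      · obtain ⟨i, rfl⟩ := hj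
        simpa [e.injective.extend_apply] using hzs (Set.mem_range_self i)
      · simpa [Function.extend_apply' _ _ _ hj] using hz₀
    · exact (Fintype.sum_of_injective e e.injective _ _
        (fun j hj => by simp [Function.extend_apply' _ _ _ hj])
        (fun i => by simp [e.injective.extend_apply])).symm
  · rintro _ ⟨⟨l, y⟩, ⟨hl, hy⟩, rfl⟩
    exact (convex_convexHull ℝ s).sum_mem (fun i _ => hl.1 i) hl.2
      fun i _ => subset_convexHull ℝ s (hy i trivial)

theorem le_of_tendsto_weighted_mean {a g : ℕ → ℝ} {c l : ℝ} (ha : ∀ k, 0 ≤ a k)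
    (hS : Tendsto (fun N => ∑ k ∈ range N, a k) atTop atTop) (hc : ∀ᶠ k in atTop, c ≤ g k)
    (hl : Tendsto (fun N => (∑ k ∈ range N, a k)⁻¹ * ∑ k ∈ range N, a k * g k) atTop (nhds l)) :
    c ≤ l := by
  obtain ⟨K, hK⟩ := eventually_atTop.1 hc
  set S := fun N => ∑ k ∈ range N, a k
  set B := ∑ k ∈ range K, a k * (g k - c)
  have hlower : ∀ᶠ N in atTop, c + (S N)⁻¹ * B ≤ (S N)⁻¹ * ∑ k ∈ range N, a k * g k := by
    filter_upwards [eventually_ge_atTop K, hS.eventually_gt_atTop 0] with N hKN hSN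
    have hB : B ≤ ∑ k ∈ range N, a k * (g k - c) :=
      sum_le_sum_of_subset_of_nonneg (range_subset_range.2 hKN) fun k _ hk =>
        mul_nonneg (ha k) (sub_nonneg.2 (hK k (by simpa using hk)))
    have hsplit : ∑ k ∈ range N, a k * (g k - c) = ∑ k ∈ range N, a k * g k - c * S N := by
      simp only [S, mul_sub, sum_sub_distrib, sum_mul, mul_comm c]
    calc c + (S N)⁻¹ * B = (S N)⁻¹ * (c * S N + B) := by field_simp
      _ ≤ (S N)⁻¹ * ∑ k ∈ range N, a k * g k := by
        gcongr
        linarith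
  have hbound : Tendsto (fun N => c + (S N)⁻¹ * B) atTop (nhds c) := by
    simpa using tendsto_const_nhds.add (hS.inv_tendsto_atTop.mul_const B)
  exact le_of_tendsto_of_tendsto hbound hl hlower

theorem zero_mem_convexHull_setOf_mapClusterPt {E : Type*} [NormedAddCommGroup E]
    [NormedSpace ℝ E] [FiniteDimensional ℝ E] {v : ℕ → E} {a : ℕ → ℝ} {K : Set E}
    (hK : IsCompact K) (hvK : ∀ᶠ k in atTop, v k ∈ K) (ha : ∀ k, 0 ≤ a k)
    (hS : Tendsto (fun N => ∑ k ∈ range N, a k) atTop atTop)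
    (hmean : Tendsto (fun N => (∑ k ∈ range N, a k)⁻¹ • ∑ k ∈ range N, a k • v k) atTop
      (nhds 0)) :
    (0 : E) ∈ convexHull ℝ {p | MapClusterPt p atTop v} := by
  set L := {p | MapClusterPt p atTop v}
  have hLK : L ⊆ K := fun p hp => hK.isClosed.mem_of_mapClusterPt hp hvK
  have hL : IsCompact (convexHull ℝ L) :=
    isCompact_convexHull (hK.of_isClosed_subset isClosed_setOfPred_clusterPt hLK)
  by_contra h0
  obtain ⟨f, c, hf0, hfc⟩ :=
    geometric_hahn_banach_point_closed (convex_convexHull ℝ L) hL.isClosed h0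
  have hlate : ∀ᶠ k in atTop, c ≤ f (v k) := by
    have hU : {p | c < f p} ∈ nhdsSet (convexHull ℝ L) :=
      (isOpen_lt continuous_const f.continuous).mem_nhdsSet.2 hfc
    exact ((hK.tendsto_nhdsSet_of_mapClusterPt hvK
      fun p _ hp => subset_convexHull ℝ L hp).eventually_mem hU).mono fun k hk => le_of_lt hk
  have hfmean : Tendsto (fun N => (∑ k ∈ range N, a k)⁻¹ * ∑ k ∈ range N, a k * f (v k)) atTop
      (nhds 0) := by
    simpa [Function.comp_def, map_sum, map_smul] using (f.continuous.tendsto 0).comp hmean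
  exact (map_zero f ▸ hf0).not_ge (le_of_tendsto_weighted_mean ha hS hlate hfmean)

theorem tendsto_weighted_mean_of_telescoping {E : Type*} [NormedAddCommGroup E]
    [NormedSpace ℝ E] {x w e : ℕ → E} {a : ℕ → ℝ} {x₀ : E}
    (hrec : ∀ k, x (k + 1) = x k + w k + e k) (hx : Tendsto x atTop (nhds x₀))
    (hS : Tendsto (fun N => ∑ k ∈ range N, a k) atTop atTop)
    (he : Tendsto (fun N => (∑ k ∈ range N, a k)⁻¹ • ∑ k ∈ range N, e k) atTop (nhds 0)) :
    Tendsto (fun N => (∑ k ∈ range N, a k)⁻¹ • ∑ k ∈ range N, w k) atTop (nhds 0) := by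
  have hsum_w : ∀ N, ∑ k ∈ range N, w k = (x N - x 0) - ∑ k ∈ range N, e k := by
    intro N
    rw [← sum_range_sub x, ← sum_sub_distrib]
    exact sum_congr rfl fun k _ => by rw [hrec]; abel
  have hxmean : Tendsto (fun N => (∑ k ∈ range N, a k)⁻¹ • (x N - x 0)) atTop (nhds 0) := by
    simpa using hS.inv_tendsto_atTop.smul (hx.sub_const (x 0))
  simpa only [hsum_w, smul_sub, sub_zero] using hxmean.sub he

theorem zero_mem_convexHull_outer_limit_general {n : ℕ}
    (F : EuclideanSpace ℝ (Fin n) → ℝ → Set (EuclideanSpace ℝ (Fin n)))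
    (x w e : ℕ → EuclideanSpace ℝ (Fin n)) (α : ℕ → ℝ)
    (hαpos : ∀ k, 0 < α k)
    (hw : ∀ k, w k ∈ F (x k) (α k))
    (hrec : ∀ k, x (k + 1) = x k + w k + e k)
    (ᾱ : ℝ)
    (hαlim : Tendsto α atTop (nhds ᾱ))
    (hdiv : Tendsto (fun N => ∑ k ∈ Finset.range (N + 1), α k) atTop atTop)
    (hnoise : Tendsto
      (fun N => (∑ k ∈ Finset.range (N + 1), α k)⁻¹ • (∑ k ∈ Finset.range (N + 1), e k))
      atTop (nhds 0))
    (xstar : EuclideanSpace ℝ (Fin n)) (hxlim : Tendsto x atTop (nhds xstar))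
    (hlb : ∃ r > (0 : ℝ), ∃ M > (0 : ℝ), ∀ y, ‖y - xstar‖ ≤ r → ∀ a : ℝ, 0 < a →
      |a - ᾱ| ≤ r → ∀ v ∈ F y a, ‖v‖ / a ≤ M) :
    (0 : EuclideanSpace ℝ (Fin n)) ∈ convexHull ℝ
      {v : EuclideanSpace ℝ (Fin n) |
        ∃ (y : ℕ → EuclideanSpace ℝ (Fin n)) (a : ℕ → ℝ)
          (u : ℕ → EuclideanSpace ℝ (Fin n)),
          (∀ j, 0 < a j) ∧ Tendsto y atTop (nhds xstar) ∧ Tendsto a atTop (nhds ᾱ) ∧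
          (∀ j, u j ∈ F (y j) (a j)) ∧
          Tendsto (fun j => (a j)⁻¹ • u j) atTop (nhds v)} := by
  obtain ⟨r, hr, M, -, hbound⟩ := hlb
  set v := fun k => (α k)⁻¹ • w k
  have hv_bdd : ∀ᶠ k in atTop, v k ∈ Metric.closedBall 0 M := by
    filter_upwards [hxlim (Metric.closedBall_mem_nhds xstar hr),
      hαlim (Metric.closedBall_mem_nhds ᾱ hr)] with k hxk hαk
    rw [mem_closedBall_zero_iff, norm_smul, norm_inv, Real.norm_of_nonneg (hαpos k).le,
      inv_mul_eq_div]
    exact hbound _ (mem_closedBall_iff_norm.1 hxk) _ (hαpos k) (Real.dist_eq _ _ ▸ hαk) _ (hw k)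
  have hS : Tendsto (fun N => ∑ k ∈ range N, α k) atTop atTop :=
    (tendsto_add_atTop_iff_nat (f := fun N => ∑ k ∈ range N, α k) 1).1 hdiv
  have he : Tendsto (fun N => (∑ k ∈ range N, α k)⁻¹ • ∑ k ∈ range N, e k) atTop (nhds 0) :=
    (tendsto_add_atTop_iff_nat
      (f := fun N => (∑ k ∈ range N, α k)⁻¹ • ∑ k ∈ range N, e k) 1).1 hnoise
  have hmean : Tendsto (fun N => (∑ k ∈ range N, α k)⁻¹ • ∑ k ∈ range N, α k • v k) atTop
      (nhds 0) := by
    simpa only [v, smul_inv_smul₀ (hαpos _).ne'] using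
      tendsto_weighted_mean_of_telescoping hrec hxlim hS he
  refine convexHull_mono (fun p hp => ?_) (zero_mem_convexHull_setOf_mapClusterPt
    (isCompact_closedBall 0 M) hv_bdd (fun k => (hαpos k).le) hS hmean)
  obtain ⟨ψ, hψ, hvψ⟩ := MapClusterPt.tendsto_subseq hp
  exact ⟨x ∘ ψ, α ∘ ψ, w ∘ ψ, fun j => hαpos (ψ j), hxlim.comp hψ.tendsto_atTop,
    hαlim.comp hψ.tendsto_atTop, fun j => hw (ψ j), hvψ⟩

/-- If a realization of the difference inclusion converges and the scaled
update map is locally bounded, then `0` lies in the convex hull of the outer limit of the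
scaled update map at the limit point. -/
theorem zero_mem_convexHull_outer_limit {n : ℕ}
    (F : EuclideanSpace ℝ (Fin n) → ℝ → Set (EuclideanSpace ℝ (Fin n)))
    (x w e : ℕ → EuclideanSpace ℝ (Fin n)) (α : ℕ → ℝ)
    (hαpos : ∀ k, 0 < α k)
    (hw : ∀ k, w k ∈ F (x k) (α k))
    (hrec : ∀ k, x (k + 1) = x k + w k + e k)
    (ᾱ : ℝ) (hᾱ : 0 ≤ ᾱ)
    (hαlim : Tendsto α atTop (nhds ᾱ))
    (hdiv : Tendsto (fun N => ∑ k ∈ Finset.range (N + 1), α k) atTop atTop)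
    (hnoise : Tendsto
      (fun N => (∑ k ∈ Finset.range (N + 1), α k)⁻¹ • (∑ k ∈ Finset.range (N + 1), e k))
      atTop (nhds 0))
    (xstar : EuclideanSpace ℝ (Fin n)) (hxlim : Tendsto x atTop (nhds xstar))
    (hlb : ∃ r > (0 : ℝ), ∃ M > (0 : ℝ), ∀ y, ‖y - xstar‖ ≤ r → ∀ a : ℝ, 0 < a →
      |a - ᾱ| ≤ r → ∀ v ∈ F y a, ‖v‖ / a ≤ M) :
    (0 : EuclideanSpace ℝ (Fin n)) ∈ convexHull ℝ
      {v : EuclideanSpace ℝ (Fin n) |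
        ∃ (y : ℕ → EuclideanSpace ℝ (Fin n)) (a : ℕ → ℝ)
          (u : ℕ → EuclideanSpace ℝ (Fin n)),
          (∀ j, 0 < a j) ∧ Tendsto y atTop (nhds xstar) ∧ Tendsto a atTop (nhds ᾱ) ∧
          (∀ j, u j ∈ F (y j) (a j)) ∧
          Tendsto (fun j => (a j)⁻¹ • u j) atTop (nhds v)} :=
  zero_mem_convexHull_outer_limit_general F x w e α hαpos hw hrec ᾱ hαlim hdiv hnoise xstar hxlim
    hlb
end

section
/- Let H : ℝⁿ → Set ℝⁿ be a set-valued map and x ∈ ℝⁿ. Assume H is outer semicontinuous at x (whenever z_j → x, h_j ∈ H(z_j), and h_j → h, one has h ∈ H(x)) and locally bounded at x (there exist r > 0 and M > 0 such that |h| ≤ M for every z in the closed ball B(x,r) and every h ∈ H(z)). Then for every v ∈ ℝⁿ such that there exist sequences (y_j, α_j) → (x, 0) with α_j ≥ 0 and u_j ∈ co H(B(y_j, α_j)) with u_j → v, one has v ∈ co H(x); that is, the outer limit limsup_{(y,α)→(x,0)} co H(B(y,α)) is contained in co H(x). -/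
/-!
Outer semicontinuity and a uniform bound near `x` make `H` upper semicontinuous at `x` in the
metric sense: for `z` near `x`, `H z` lies in the `ε`-thickening of `H x`. Thickenings of convex
sets are convex, so `co H(B(y_j, α_j))` eventually lies in the `ε`-thickening of `co H(x)`, hence
`v` lies in the closure of `co H(x)`. That hull is closed, being the convex hull of the compact set
`H(x)` in finite dimension.
-/

open Filter Metric Set Topology

/-- By Carathéodory, every point of `convexHull ℝ s` is a convex combination of at most
`finrank ℝ E + 1` points of `s`, so the hull is a finite union of continuous images of
`stdSimplex ℝ (Fin k) × sᵏ`. -/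
theorem IsCompact.convexHull {E : Type*} [AddCommGroup E] [Module ℝ E] [TopologicalSpace E]
    [IsTopologicalAddGroup E] [ContinuousSMul ℝ E] [FiniteDimensional ℝ E] {s : Set E}
    (hs : IsCompact s) : IsCompact (_root_.convexHull ℝ s) := by
  let combine (k : ℕ) (q : (Fin k → ℝ) × (Fin k → E)) : E := ∑ i, q.1 i • q.2 i
  have hunion : _root_.convexHull ℝ s = ⋃ k : Fin (Module.finrank ℝ E + 2),
      combine k '' (stdSimplex ℝ (Fin k) ×ˢ univ.pi fun _ => s) := by
    refine Subset.antisymm (fun x hx => ?_) (iUnion_subset fun k => ?_)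
    · obtain ⟨ι, _, z, w, hzs, hind, hw0, hw1, rfl⟩ := eq_pos_convex_span_of_mem_convexHull hx
      have hcard : Fintype.card ι < Module.finrank ℝ E + 2 :=
        Nat.lt_succ_of_le (hind.card_le_finrank_succ.trans
          (Nat.succ_le_succ (Submodule.finrank_le _)))
      let e := (Fintype.equivFin ι).symm
      refine mem_iUnion.mpr ⟨⟨_, hcard⟩, (w ∘ e, z ∘ e), ⟨⟨fun i => (hw0 _).le, ?_⟩,
        fun i _ => hzs (mem_range_self _)⟩, Equiv.sum_comp e fun i => w i • z i⟩
      rw [← hw1]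
      exact Equiv.sum_comp e w
    · rintro _ ⟨⟨w, p⟩, ⟨⟨hw0, hw1⟩, hp⟩, rfl⟩
      exact (convex_convexHull ℝ s).sum_mem (fun i _ => hw0 i) hw1
        fun i _ => subset_convexHull ℝ s (hp i (mem_univ i))
  rw [hunion]
  exact isCompact_iUnion fun k =>
    ((isCompact_stdSimplex ℝ _).prod (isCompact_univ_pi fun _ => hs)).image <|
      continuous_finsetSum _ fun i _ =>
        ((continuous_apply i).comp continuous_fst).smul ((continuous_apply i).comp continuous_snd)

theorem convexHull_subset_thickening {E : Type*} [SeminormedAddCommGroup E] [NormedSpace ℝ E]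
    {s t : Set E} {ε : ℝ} (hts : t ⊆ thickening ε s) :
    convexHull ℝ t ⊆ thickening ε (convexHull ℝ s) :=
  convexHull_min (hts.trans (thickening_subset_of_subset ε (subset_convexHull ℝ s)))
    ((convex_convexHull ℝ s).thickening ε)

theorem Filter.Eventually.forall_mem_closedBall_of_tendsto {α ι : Type*} [PseudoMetricSpace α]
    {l : Filter ι} {p : α → Prop} {x : α} (hp : ∀ᶠ z in 𝓝 x, p z) {y : ι → α} {a : ι → ℝ}
    (hy : Tendsto y l (𝓝 x)) (ha : Tendsto a l (𝓝 0)) :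
    ∀ᶠ j in l, ∀ z ∈ closedBall (y j) (a j), p z := by
  obtain ⟨δ, hδ, hball⟩ := eventually_nhds_iff_ball.mp hp
  filter_upwards [hy (ball_mem_nhds x (half_pos hδ)), ha (Iio_mem_nhds (half_pos hδ))]
    with j hyj haj z hz
  apply hball
  calc dist z x ≤ dist z (y j) + dist (y j) x := dist_triangle _ _ _
    _ < δ / 2 + δ / 2 := add_lt_add_of_le_of_lt ((mem_closedBall.mp hz).trans haj.le) hyj
    _ = δ := add_halves δ

theorem mem_closure_of_tendsto_of_eventually_mem_thickening {α ι : Type*} [PseudoMetricSpace α]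
    {l : Filter ι} [l.NeBot] {s : Set α} {u : ι → α} {v : α} (hu : Tendsto u l (𝓝 v))
    (hthick : ∀ ε > 0, ∀ᶠ j in l, u j ∈ thickening ε s) : v ∈ closure s := by
  refine Metric.mem_closure_iff.mpr fun ε hε => ?_
  obtain ⟨j, hjs, hjv⟩ :=
    ((hthick _ (half_pos hε)).and (hu (ball_mem_nhds v (half_pos hε)))).exists
  obtain ⟨b, hb, hjb⟩ := mem_thickening_iff.mp hjs
  refine ⟨b, hb, ?_⟩
  calc dist v b ≤ dist v (u j) + dist (u j) b := dist_triangle _ _ _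
    _ < ε / 2 + ε / 2 := add_lt_add (by rwa [dist_comm]) hjb
    _ = ε := add_halves ε

def SeqOuterSemicontinuousAt {X E : Type*} [TopologicalSpace X] [TopologicalSpace E]
    (H : X → Set E) (x : X) : Prop :=
  ∀ (z : ℕ → X) (h : ℕ → E) (l : E),
    Tendsto z atTop (𝓝 x) → (∀ j, h j ∈ H (z j)) → Tendsto h atTop (𝓝 l) → l ∈ H x

namespace SeqOuterSemicontinuousAt

variable {X E : Type*} [TopologicalSpace X] {H : X → Set E} {x : X}

theorem isClosed [TopologicalSpace E] [SequentialSpace E] (hH : SeqOuterSemicontinuousAt H x) :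
    IsClosed (H x) :=
  IsSeqClosed.isClosed fun _ _ hf hl => hH _ _ _ tendsto_const_nhds hf hl

theorem eventually_subset_thickening [FirstCountableTopology X] [PseudoMetricSpace E]
    (hH : SeqOuterSemicontinuousAt H x) {K : Set E} (hK : IsCompact K)
    (hHK : ∀ᶠ z in 𝓝 x, H z ⊆ K) {ε : ℝ} (hε : 0 < ε) :
    ∀ᶠ z in 𝓝 x, H z ⊆ thickening ε (H x) := by
  by_contra hbad
  obtain ⟨z, hzx, hzbad⟩ :=
    exists_seq_forall_of_frequently ((not_eventually.mp hbad).and_eventually hHK)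
  choose h hhz hhfar using fun k => not_subset.mp (hzbad k).1
  obtain ⟨l, -, φ, hφ, hφl⟩ := hK.tendsto_subseq fun k => (hzbad k).2 (hhz k)
  have hl : l ∈ H x := hH (z ∘ φ) (h ∘ φ) l (hzx.comp hφ.tendsto_atTop) (fun k => hhz (φ k)) hφl
  obtain ⟨k, hk⟩ := (hφl.eventually (ball_mem_nhds l hε)).exists
  exact hhfar (φ k) (mem_thickening_iff.mpr ⟨l, hl, hk⟩)

end SeqOuterSemicontinuousAt

/-- If `H` is outer semicontinuous and locally bounded at `x`, then the
outer limit of `(y,α) ↦ co H(B(y,α))` at `(x,0)` is contained in `co H(x)`. -/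
theorem outer_limit_co_enlargement_subset {n : ℕ}
    (H : EuclideanSpace ℝ (Fin n) → Set (EuclideanSpace ℝ (Fin n)))
    (x : EuclideanSpace ℝ (Fin n))
    (hosc : ∀ (z h : ℕ → EuclideanSpace ℝ (Fin n)) (hl : EuclideanSpace ℝ (Fin n)),
      Tendsto z atTop (nhds x) → (∀ j, h j ∈ H (z j)) → Tendsto h atTop (nhds hl) →
      hl ∈ H x)
    (hlb : ∃ r > (0 : ℝ), ∃ M > (0 : ℝ), ∀ z ∈ Metric.closedBall x r, ∀ h ∈ H z, ‖h‖ ≤ M)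
    (v : EuclideanSpace ℝ (Fin n))
    (hv : ∃ (y : ℕ → EuclideanSpace ℝ (Fin n)) (a : ℕ → ℝ)
        (u : ℕ → EuclideanSpace ℝ (Fin n)),
        (∀ j, 0 ≤ a j) ∧ Tendsto y atTop (nhds x) ∧ Tendsto a atTop (nhds (0 : ℝ)) ∧
        (∀ j, u j ∈ convexHull ℝ (⋃ z ∈ Metric.closedBall (y j) (a j), H z)) ∧
        Tendsto u atTop (nhds v)) :
    v ∈ convexHull ℝ (H x) := by
  have hH : SeqOuterSemicontinuousAt H x := hosc
  obtain ⟨r, hr, M, -, hbd⟩ := hlb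
  obtain ⟨y, a, u, -, hy, ha, hu, huv⟩ := hv
  have hHK : ∀ᶠ z in 𝓝 x, H z ⊆ closedBall 0 M :=
    eventually_of_mem (closedBall_mem_nhds x hr) fun z hz h hh =>
      mem_closedBall_zero_iff.mpr (hbd z hz h hh)
  have hcpt : IsCompact (convexHull ℝ (H x)) :=
    ((isCompact_closedBall 0 M).of_isClosed_subset hH.isClosed hHK.self_of_nhds).convexHull
  rw [← hcpt.isClosed.closure_eq]
  refine mem_closure_of_tendsto_of_eventually_mem_thickening huv fun ε hε => ?_
  filter_upwards [(hH.eventually_subset_thickening (isCompact_closedBall 0 M) hHK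
    hε).forall_mem_closedBall_of_tendsto hy ha] with j hj
  exact convexHull_subset_thickening (iUnion₂_subset hj) (hu j)
end

section
/- Let ζ ∈ (0,1) and let (α_k)_{k∈ℕ} be positive reals with α_k = Θ((k+1)^{−1}), i.e., there exist 0 < c₁ ≤ c₂ with c₁/(k+1) ≤ α_k ≤ c₂/(k+1) for all k. Define the window indices s_0 := 0 and s_{t+1} := the least k > s_t such that Σ_{i=s_t}^{k} α_i > α_{s_t}^{ζ}, and set a_t := Σ_{k=s_t}^{s_{t+1}−1} α_k. Then s_t = Θ((t+1)^{1/ζ}), a_t = Θ((t+1)^{−1}), and a_t = Θ(α_{s_t}^{ζ}); that is, there exist positive constants C₁ ≤ C₂, D₁ ≤ D₂, E₁ ≤ E₂ such that for all sufficiently large t, C₁(t+1)^{1/ζ} ≤ s_t ≤ C₂(t+1)^{1/ζ}, D₁(t+1)^{−1} ≤ a_t ≤ D₂(t+1)^{−1}, and E₁α_{s_t}^{ζ} ≤ a_t ≤ E₂α_{s_t}^{ζ}. -/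
/-!
Write `x_t = s_t + 1` and `y_t = x_t ^ ζ`. Since `α_k ≍ 1/(k+1)`, the window sum `a_t` is squeezed
between `c₁ (x_{t+1} - x_t)/x_{t+1}` and `c₂ (x_{t+1} - x_t)/x_t`. By minimality of `s_{t+1}` it is
also at most `α_{s_t}^ζ`, and it falls short of `α_{s_t}^ζ` by less than the single term
`α_{s_{t+1}} = O(1/x_t) = o(x_t^{-ζ})`; hence `a_t ≍ α_{s_t}^ζ ≍ 1/y_t`. Bernoulli's inequality for
the concave map `x ↦ x^ζ` turns these two descriptions of `a_t` into increments `y_{t+1} - y_t`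
bounded above and below by positive constants, so `y_t ≍ t + 1`, and then
`s_t ≍ (t+1)^{1/ζ}` and `a_t ≍ 1/y_t ≍ 1/(t+1)`.
-/

open Real Finset Filter Asymptotics

namespace Asymptotics

variable {ι : Type*} {l : Filter ι} {f g : ι → ℝ}

theorem isTheta_of_eventually_mul_le {C₁ C₂ : ℝ} (hC₁ : 0 < C₁) (hg : 0 ≤ᶠ[l] g)
    (h : ∀ᶠ i in l, C₁ * g i ≤ f i ∧ f i ≤ C₂ * g i) : f =Θ[l] g := by
  refine ⟨IsBigO.of_bound C₂ ?_, IsBigO.of_bound C₁⁻¹ ?_⟩ <;>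
    filter_upwards [hg, h] with i hgi ⟨hlo, hhi⟩
  · have hfi : 0 ≤ f i := (mul_nonneg hC₁.le hgi).trans hlo
    rw [norm_of_nonneg hfi, norm_of_nonneg hgi]
    exact hhi
  · have hfi : 0 ≤ f i := (mul_nonneg hC₁.le hgi).trans hlo
    rw [norm_of_nonneg hfi, norm_of_nonneg hgi, inv_mul_eq_div, le_div_iff₀' hC₁]
    exact hlo

theorem IsTheta.exists_pos_mul_le (h : f =Θ[l] g) (hf : 0 ≤ᶠ[l] f) (hg : 0 ≤ᶠ[l] g) :
    ∃ C₁ C₂ : ℝ, 0 < C₁ ∧ C₁ ≤ C₂ ∧ ∀ᶠ i in l, C₁ * g i ≤ f i ∧ f i ≤ C₂ * g i := by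
  obtain ⟨c, -, hfg⟩ := h.1.exists_pos
  obtain ⟨c', hc', hgf⟩ := h.2.exists_pos
  refine ⟨c'⁻¹, max c c'⁻¹, inv_pos.2 hc', le_max_right _ _, ?_⟩
  filter_upwards [hfg.bound, hgf.bound, hf, hg] with i hfgi hgfi hfi hgi
  rw [norm_of_nonneg hfi, norm_of_nonneg hgi] at hfgi hgfi
  constructor
  · rw [inv_mul_eq_div, div_le_iff₀' hc']
    exact hgfi
  · exact hfgi.trans (mul_le_mul_of_nonneg_right (le_max_left _ _) hgi)

theorem IsTheta.comp_tendsto {β : Type*} {l' : Filter β} {k : β → ι} (h : f =Θ[l] g)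
    (hk : Tendsto k l' l) : (f ∘ k) =Θ[l'] (g ∘ k) :=
  ⟨h.1.comp_tendsto hk, h.2.comp_tendsto hk⟩

end Asymptotics

theorem isTheta_natCast_add_one : (fun n : ℕ => (n : ℝ)) =Θ[atTop] fun n => (n : ℝ) + 1 := by
  refine isTheta_of_eventually_mul_le (C₁ := 1 / 2) (C₂ := 1) (by norm_num)
    (Eventually.of_forall fun n => by positivity) ?_
  filter_upwards [eventually_ge_atTop 1] with n hn
  have : (1 : ℝ) ≤ n := by exact_mod_cast hn
  constructor <;> linarith

theorem isTheta_add_one_of_sub_mem_Icc {y : ℕ → ℝ} {p q : ℝ} (hp : 0 < p) (hy : ∀ t, 0 < y t)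
    (h : ∀ᶠ t in atTop, y (t + 1) - y t ∈ Set.Icc p q) :
    y =Θ[atTop] fun t => (t : ℝ) + 1 := by
  obtain ⟨T, hT⟩ := eventually_atTop.1 h
  have hlin : ∀ t ≥ T, y T + p * (t - T) ≤ y t ∧ y t ≤ y T + q * (t - T) := by
    intro t ht
    induction t, ht using Nat.le_induction with
    | base => simp
    | succ t ht ih =>
      obtain ⟨hpt, hqt⟩ := hT t ht
      push_cast
      constructor <;> linarith [ih.1, ih.2]
  set m := min (y T) p
  have hm : 0 < m := lt_min (hy T) hp
  refine isTheta_of_eventually_mul_le (C₁ := m / (T + 1)) (C₂ := max (y T) q) (by positivity)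
    (Eventually.of_forall fun t => by positivity) ?_
  filter_upwards [eventually_ge_atTop T] with t ht
  have htT : (T : ℝ) ≤ t := by exact_mod_cast ht
  have hmy : m ≤ y T := min_le_left _ _
  have hmp : m ≤ p := min_le_right _ _
  have hMy : y T ≤ max (y T) q := le_max_left _ _
  have hMq : q ≤ max (y T) q := le_max_right _ _
  obtain ⟨hlo, hhi⟩ := hlin t ht
  constructor
  · rw [div_mul_eq_mul_div, div_le_iff₀ (by positivity)]
    nlinarith [mul_nonneg hm.le (sub_nonneg.2 htT),
      mul_nonneg (sub_nonneg.2 hmp) (sub_nonneg.2 htT)]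
  · nlinarith [mul_nonneg (sub_nonneg.2 hMq) (sub_nonneg.2 htT)]

theorem rpow_sub_rpow_le_mul_div {ζ x x' : ℝ} (hζ₀ : 0 ≤ ζ) (hζ₁ : ζ ≤ 1) (hx : 0 < x)
    (hx' : 0 ≤ x') : x' ^ ζ - x ^ ζ ≤ ζ * x ^ ζ * (x' - x) / x := by
  have hsplit : x' = x * (1 + (x' - x) / x) := by field_simp; ring
  have hbase : -1 ≤ (x' - x) / x := by
    rw [le_div_iff₀ hx]; linarith
  have hbern := rpow_one_add_le_one_add_mul_self hbase hζ₀ hζ₁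
  rw [hsplit, mul_rpow hx.le (by linarith), ← hsplit]
  calc x ^ ζ * (1 + (x' - x) / x) ^ ζ - x ^ ζ ≤ x ^ ζ * (1 + ζ * ((x' - x) / x)) - x ^ ζ := by
        gcongr
    _ = ζ * x ^ ζ * (x' - x) / x := by ring

theorem eventually_div_le_div_rpow {ζ : ℝ} (hζ : ζ < 1) (c : ℝ) {d : ℝ} (hd : 0 < d) :
    ∀ᶠ x : ℝ in atTop, c / x ≤ d / x ^ ζ := by
  filter_upwards [(tendsto_rpow_atTop (sub_pos.2 hζ)).eventually_ge_atTop (c / d),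
    eventually_gt_atTop 0] with x hx hx0
  have hsplit : x ^ (1 - ζ) * x ^ ζ = x := by rw [← rpow_add hx0]; simp
  rw [div_le_iff₀ hd] at hx
  rw [div_le_div_iff₀ hx0 (rpow_pos_of_pos hx0 ζ)]
  calc c * x ^ ζ ≤ x ^ (1 - ζ) * d * x ^ ζ := by gcongr
    _ = d * x := by linear_combination d * hsplit

theorem sum_Ico_mem_Icc_of_mem_div_succ {α : ℕ → ℝ} {c₁ c₂ : ℝ} (hc₁ : 0 ≤ c₁) (hc₂ : 0 ≤ c₂)
    (hα : ∀ k : ℕ, c₁ / ((k : ℝ) + 1) ≤ α k ∧ α k ≤ c₂ / ((k : ℝ) + 1)) {m n : ℕ} (hmn : m ≤ n) :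
    ∑ k ∈ Ico m n, α k ∈
      Set.Icc (c₁ * ((n : ℝ) - m) / ((n : ℝ) + 1)) (c₂ * ((n : ℝ) - m) / ((m : ℝ) + 1)) := by
  have hcard : ((#(Ico m n) : ℕ) : ℝ) = (n : ℝ) - m := by
    rw [Nat.card_Ico, Nat.cast_sub hmn]
  constructor
  · have := card_nsmul_le_sum (Ico m n) α (c₁ / ((n : ℝ) + 1)) fun k hk =>
      (div_le_div_of_nonneg_left hc₁ (by positivity)
        (by gcongr; exact (mem_Ico.1 hk).2.le)).trans (hα k).1
    rwa [nsmul_eq_mul, hcard, mul_div_assoc', mul_comm] at this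
  · have := sum_le_card_nsmul (Ico m n) α (c₂ / ((m : ℝ) + 1)) fun k hk =>
      (hα k).2.trans (div_le_div_of_nonneg_left hc₂ (by positivity)
        (by gcongr; exact (mem_Ico.1 hk).1))
    rwa [nsmul_eq_mul, hcard, mul_div_assoc', mul_comm] at this

def IsWindow (ζ : ℝ) (α : ℕ → ℝ) (m n : ℕ) : Prop :=
  IsLeast {k : ℕ | m < k ∧ α m ^ ζ < ∑ i ∈ Icc m k, α i} n

namespace IsWindow

variable {ζ : ℝ} {α : ℕ → ℝ} {m n : ℕ}

theorem lt (h : IsWindow ζ α m n) : m < n := h.1.1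

theorem rpow_sub_lt_sum (h : IsWindow ζ α m n) : α m ^ ζ - α n < ∑ i ∈ Ico m n, α i := by
  have hexceed := h.1.2
  rw [← Ico_add_one_right_eq_Icc, sum_Ico_succ_top h.lt.le] at hexceed
  linarith

theorem sum_le_rpow (h : IsWindow ζ α m n) (hζ : ζ ≤ 1) (hα₀ : 0 ≤ α m) (hα₁ : α m ≤ 1) :
    ∑ i ∈ Ico m n, α i ≤ α m ^ ζ := by
  obtain ⟨k, rfl⟩ : ∃ k, n = k + 1 := Nat.exists_eq_add_one.2 (Nat.zero_lt_of_lt h.lt)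
  rw [Ico_add_one_right_eq_Icc]
  rcases (Nat.lt_succ_iff.1 h.lt).eq_or_lt with rfl | hmk
  · rw [Icc_self, sum_singleton]
    exact self_le_rpow_of_le_one hα₀ hα₁ hζ
  · by_contra! hk
    have := h.2 ⟨hmk, hk⟩
    omega

end IsWindow

theorem strictMono_of_isWindow {ζ : ℝ} {α : ℕ → ℝ} {s : ℕ → ℕ}
    (hs : ∀ t, IsWindow ζ α (s t) (s (t + 1))) : StrictMono s :=
  strictMono_nat_of_lt_succ fun t => (hs t).lt

theorem rpow_sub_rpow_mem_Icc_of_window {ζ c₁ c₂ b₁ b₂ x x' a : ℝ} (hζ₀ : 0 ≤ ζ) (hζ₁ : ζ ≤ 1)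
    (hc₁ : 0 < c₁) (hc₂ : 0 < c₂) (hx : 0 < x) (hxx' : x ≤ x')
    (hlow : c₁ * (x' - x) / x' ≤ a) (hup : a ≤ c₂ * (x' - x) / x)
    (hb₁ : b₁ * (x ^ ζ)⁻¹ ≤ a) (hb₂ : a ≤ b₂ * (x ^ ζ)⁻¹) (hlarge : 2 * b₂ ≤ c₁ * x ^ ζ) :
    x' ^ ζ - x ^ ζ ∈ Set.Icc (ζ * b₁ / (2 * c₂)) (2 * ζ * b₂ / c₁) := by
  have hx' : 0 < x' := hx.trans_le hxx'
  set y := x ^ ζ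
  have hy : 0 < y := rpow_pos_of_pos hx ζ
  have hyy' : y ≤ x' ^ ζ := rpow_le_rpow hx.le hxx' hζ₀
  set u := (x' - x) / x'
  set v := (x' - x) / x
  have hu₀ : 0 ≤ u := div_nonneg (sub_nonneg.2 hxx') hx'.le
  have hlow' : c₁ * u ≤ a := by rwa [mul_div_assoc] at hlow
  have hup' : a ≤ c₂ * v := by rwa [mul_div_assoc] at hup
  have hay₁ : b₁ ≤ a * y := by rwa [← div_eq_mul_inv, div_le_iff₀ hy] at hb₁
  have hay₂ : a * y ≤ b₂ := by rwa [← div_eq_mul_inv, le_div_iff₀ hy] at hb₂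
  -- The window is short: `x' ≤ 2 x`, so `u` and `v` are comparable.
  have hu : u ≤ 1 / 2 := by
    refine le_of_mul_le_mul_left ?_ (mul_pos hc₁ hy)
    nlinarith [mul_le_mul_of_nonneg_right hlow' hy.le]
  have hv : v ≤ 2 * u := by
    have hxx'2 : x' / 2 ≤ x := by
      rw [div_le_iff₀ hx'] at hu; linarith
    calc v ≤ (x' - x) / (x' / 2) :=
          div_le_div_of_nonneg_left (sub_nonneg.2 hxx') (by positivity) hxx'2
      _ = 2 * u := by ring
  have hupper : x' ^ ζ - y ≤ ζ * y * v := by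
    rw [← mul_div_assoc]; exact rpow_sub_rpow_le_mul_div hζ₀ hζ₁ hx hx'.le
  have hlower : ζ * x' ^ ζ * u ≤ x' ^ ζ - y := by
    have := rpow_sub_rpow_le_mul_div hζ₀ hζ₁ hx' hx.le
    have hneg : (x - x') / x' = -u := by rw [← neg_div, neg_sub]
    rw [mul_div_assoc, hneg] at this
    linarith
  constructor
  · rw [div_le_iff₀ (by positivity)]
    nlinarith [mul_le_mul_of_nonneg_left hyy' (mul_nonneg hζ₀ hu₀),
      mul_le_mul_of_nonneg_left hup' (mul_nonneg hζ₀ hy.le),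
      mul_le_mul_of_nonneg_left hv (mul_nonneg (mul_nonneg hζ₀ hy.le) hc₂.le)]
  · rw [le_div_iff₀ hc₁]
    nlinarith [mul_le_mul_of_nonneg_left hlow' (mul_nonneg hζ₀ hy.le),
      mul_le_mul_of_nonneg_left hv (mul_nonneg hζ₀ hy.le)]

theorem isTheta_rpow_of_window_sums {ζ c₁ c₂ : ℝ} {x a : ℕ → ℝ} (hζ : ζ ∈ Set.Ioo (0 : ℝ) 1)
    (hc₁ : 0 < c₁) (hc₂ : 0 < c₂) (hx : ∀ t, 0 < x t) (hx_mono : Monotone x)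
    (hx_top : Tendsto x atTop atTop)
    (hwin : ∀ t, a t ∈ Set.Icc (c₁ * (x (t + 1) - x t) / x (t + 1)) (c₂ * (x (t + 1) - x t) / x t))
    (ha : a =Θ[atTop] fun t => (x t ^ ζ)⁻¹) :
    (fun t => x t ^ ζ) =Θ[atTop] fun t => (t : ℝ) + 1 := by
  have hstep : ∀ t, x t ≤ x (t + 1) := fun t => hx_mono t.le_succ
  have ha₀ : ∀ t, 0 ≤ a t := fun t =>
    (div_nonneg (mul_nonneg hc₁.le (sub_nonneg.2 (hstep t))) (hx _).le).trans (hwin t).1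
  obtain ⟨b₁, b₂, hb₁, -, hb⟩ := ha.exists_pos_mul_le (.of_forall ha₀)
    (.of_forall fun t => (inv_pos.2 (rpow_pos_of_pos (hx t) ζ)).le)
  have hlarge : ∀ᶠ t in atTop, 2 * b₂ ≤ c₁ * x t ^ ζ :=
    (((tendsto_rpow_atTop hζ.1).comp hx_top).const_mul_atTop hc₁).eventually_ge_atTop _
  refine isTheta_add_one_of_sub_mem_Icc (p := ζ * b₁ / (2 * c₂)) (q := 2 * ζ * b₂ / c₁)
    (by have := hζ.1; positivity) (fun t => rpow_pos_of_pos (hx t) ζ) ?_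
  filter_upwards [hb, hlarge] with t ⟨hb₁t, hb₂t⟩ hlarge_t
  exact rpow_sub_rpow_mem_Icc_of_window hζ.1.le hζ.2.le hc₁ hc₂ (hx t) (hstep t) (hwin t).1
    (hwin t).2 hb₁t hb₂t hlarge_t

section Windows

variable {ζ c₁ c₂ : ℝ} {α : ℕ → ℝ} {s : ℕ → ℕ}

theorem eventually_window_sum_mem_Icc (hζ : ζ ∈ Set.Ioo (0 : ℝ) 1) (hαpos : ∀ k, 0 < α k)
    (hc₁ : 0 < c₁) (hα : ∀ k : ℕ, c₁ / ((k : ℝ) + 1) ≤ α k ∧ α k ≤ c₂ / ((k : ℝ) + 1))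
    (hs : ∀ t, IsWindow ζ α (s t) (s (t + 1))) :
    ∀ᶠ t in atTop, ∑ k ∈ Ico (s t) (s (t + 1)), α k ∈ Set.Icc (α (s t) ^ ζ / 2) (α (s t) ^ ζ) := by
  have hc₂ : 0 ≤ c₂ := by simpa using ((hαpos 0).trans_le (hα 0).2).le
  have hx_top : Tendsto (fun t => (s t : ℝ) + 1) atTop atTop := tendsto_atTop_add_const_right _ 1
    (tendsto_natCast_atTop_atTop.comp (strictMono_of_isWindow hs).tendsto_atTop)
  filter_upwards
    [hx_top.eventually (eventually_div_le_div_rpow hζ.2 (2 * c₂) (rpow_pos_of_pos hc₁ ζ)),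
      hx_top.eventually_ge_atTop c₂] with t hsmall hlarge
  have hx : (0 : ℝ) < s t + 1 := by positivity
  have hαs : c₁ ^ ζ / ((s t : ℝ) + 1) ^ ζ ≤ α (s t) ^ ζ := by
    rw [← div_rpow hc₁.le hx.le]
    exact rpow_le_rpow (by positivity) (hα _).1 hζ.1.le
  have hnext : α (s (t + 1)) ≤ c₂ / ((s t : ℝ) + 1) :=
    (hα _).2.trans (div_le_div_of_nonneg_left hc₂ hx (by gcongr; exact (hs t).lt.le))
  refine ⟨?_, (hs t).sum_le_rpow hζ.2.le (hαpos _).le ((hα _).2.trans ((div_le_one hx).2 hlarge))⟩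
  have := (hs t).rpow_sub_lt_sum
  rw [mul_div_assoc] at hsmall
  linarith

theorem isTheta_window_sum (hζ : ζ ∈ Set.Ioo (0 : ℝ) 1) (hαpos : ∀ k, 0 < α k) (hc₁ : 0 < c₁)
    (hα : ∀ k : ℕ, c₁ / ((k : ℝ) + 1) ≤ α k ∧ α k ≤ c₂ / ((k : ℝ) + 1))
    (hs : ∀ t, IsWindow ζ α (s t) (s (t + 1))) :
    (fun t => ∑ k ∈ Ico (s t) (s (t + 1)), α k) =Θ[atTop] fun t => (((s t : ℝ) + 1) ^ ζ)⁻¹ := by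
  have hαθ : α =Θ[atTop] fun k : ℕ => ((k : ℝ) + 1)⁻¹ :=
    isTheta_of_eventually_mul_le hc₁ (.of_forall fun k => by positivity)
      (.of_forall fun k => by simpa only [div_eq_mul_inv] using hα k)
  have hinv : ∀ n : ℕ, ((n : ℝ) + 1)⁻¹ ^ ζ = (((n : ℝ) + 1) ^ ζ)⁻¹ := fun n =>
    inv_rpow (by positivity) ζ
  have hαsθ : (fun t => α (s t) ^ ζ) =Θ[atTop] fun t => (((s t : ℝ) + 1) ^ ζ)⁻¹ := by
    simpa only [Function.comp_def, hinv] using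
      (hαθ.rpow (r := ζ) (.of_forall fun k => (hαpos k).le)
        (.of_forall fun k => by positivity)).comp_tendsto (strictMono_of_isWindow hs).tendsto_atTop
  refine (isTheta_of_eventually_mul_le (C₁ := 1 / 2) (C₂ := 1) (by norm_num)
    (.of_forall fun t => (rpow_pos_of_pos (hαpos _) ζ).le) ?_).trans hαsθ
  filter_upwards [eventually_window_sum_mem_Icc hζ hαpos hc₁ hα hs] with t ⟨hlo, hhi⟩
  constructor <;> linarith

theorem isTheta_window_rpow (hζ : ζ ∈ Set.Ioo (0 : ℝ) 1) (hαpos : ∀ k, 0 < α k) (hc₁ : 0 < c₁)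
    (hα : ∀ k : ℕ, c₁ / ((k : ℝ) + 1) ≤ α k ∧ α k ≤ c₂ / ((k : ℝ) + 1))
    (hs : ∀ t, IsWindow ζ α (s t) (s (t + 1))) :
    (fun t => ((s t : ℝ) + 1) ^ ζ) =Θ[atTop] fun t => (t : ℝ) + 1 := by
  have hc₂ : 0 < c₂ := by simpa using (hαpos 0).trans_le (hα 0).2
  have hs_mono := strictMono_of_isWindow hs
  refine isTheta_rpow_of_window_sums hζ hc₁ hc₂ (fun t => by positivity)
    (fun m n hmn => by gcongr; exact hs_mono.monotone hmn)
    (tendsto_atTop_add_const_right _ 1 (tendsto_natCast_atTop_atTop.comp hs_mono.tendsto_atTop))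
    (fun t => ?_) (isTheta_window_sum hζ hαpos hc₁ hα hs)
  simpa only [add_sub_add_right_eq_sub] using
    sum_Ico_mem_Icc_of_mem_div_succ hc₁.le hc₂.le hα (hs t).lt.le

theorem isTheta_window_index (hζ : ζ ∈ Set.Ioo (0 : ℝ) 1) (hαpos : ∀ k, 0 < α k) (hc₁ : 0 < c₁)
    (hα : ∀ k : ℕ, c₁ / ((k : ℝ) + 1) ≤ α k ∧ α k ≤ c₂ / ((k : ℝ) + 1))
    (hs : ∀ t, IsWindow ζ α (s t) (s (t + 1))) :
    (fun t => (s t : ℝ)) =Θ[atTop] fun t => ((t : ℝ) + 1) ^ (1 / ζ) := by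
  have hroot := (isTheta_window_rpow hζ hαpos hc₁ hα hs).rpow (r := 1 / ζ)
    (.of_forall fun t => by positivity) (.of_forall fun t => by positivity)
  have hcancel : ∀ t, (((s t : ℝ) + 1) ^ ζ) ^ (1 / ζ) = (s t : ℝ) + 1 := fun t => by
    rw [one_div, rpow_rpow_inv (by positivity) hζ.1.ne']
  simp only [hcancel] at hroot
  exact (isTheta_natCast_add_one.comp_tendsto (strictMono_of_isWindow hs).tendsto_atTop).trans hroot

end Windows

theorem window_index_growth_general (ζ : ℝ) (hζ : ζ ∈ Set.Ioo (0 : ℝ) 1)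
    (α : ℕ → ℝ) (hαpos : ∀ k, 0 < α k)
    (hΘ : ∃ c₁ c₂ : ℝ, 0 < c₁ ∧ c₁ ≤ c₂ ∧ ∀ k : ℕ,
      c₁ / ((k : ℝ) + 1) ≤ α k ∧ α k ≤ c₂ / ((k : ℝ) + 1))
    (s : ℕ → ℕ)
    (hs : ∀ t, IsLeast
      {k : ℕ | s t < k ∧ (α (s t)) ^ ζ < ∑ i ∈ Finset.Icc (s t) k, α i} (s (t + 1)))
    (a : ℕ → ℝ) (ha : ∀ t, a t = ∑ k ∈ Finset.Ico (s t) (s (t + 1)), α k) :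
    ∃ C₁ C₂ D₁ D₂ E₁ E₂ : ℝ,
      0 < C₁ ∧ C₁ ≤ C₂ ∧ 0 < D₁ ∧ D₁ ≤ D₂ ∧ 0 < E₁ ∧ E₁ ≤ E₂ ∧
      ∃ T : ℕ, ∀ t ≥ T,
        (C₁ * ((t : ℝ) + 1) ^ (1 / ζ) ≤ (s t : ℝ) ∧
          (s t : ℝ) ≤ C₂ * ((t : ℝ) + 1) ^ (1 / ζ)) ∧
        (D₁ * ((t : ℝ) + 1)⁻¹ ≤ a t ∧ a t ≤ D₂ * ((t : ℝ) + 1)⁻¹) ∧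
        (E₁ * (α (s t)) ^ ζ ≤ a t ∧ a t ≤ E₂ * (α (s t)) ^ ζ) := by
  obtain ⟨c₁, c₂, hc₁, -, hα⟩ := hΘ
  obtain rfl : a = fun t => ∑ k ∈ Ico (s t) (s (t + 1)), α k := funext ha
  have hE := eventually_window_sum_mem_Icc hζ hαpos hc₁ hα hs
  obtain ⟨C₁, C₂, hC₁, hC₁₂, hC⟩ := (isTheta_window_index hζ hαpos hc₁ hα hs).exists_pos_mul_le
    (.of_forall fun t => by positivity) (.of_forall fun t => by positivity)
  obtain ⟨D₁, D₂, hD₁, hD₁₂, hD⟩ :=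
    ((isTheta_window_sum hζ hαpos hc₁ hα hs).trans
      (isTheta_window_rpow hζ hαpos hc₁ hα hs).inv).exists_pos_mul_le
    (hE.mono fun t h => (div_nonneg (rpow_pos_of_pos (hαpos _) ζ).le two_pos.le).trans h.1)
    (.of_forall fun t => by positivity)
  obtain ⟨T, hT⟩ := eventually_atTop.1 (hC.and (hD.and hE))
  refine ⟨C₁, C₂, D₁, D₂, 1 / 2, 1, hC₁, hC₁₂, hD₁, hD₁₂, by norm_num, by norm_num, T,
    fun t ht => ?_⟩
  obtain ⟨hCt, hDt, hEt⟩ := hT t ht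
  exact ⟨hCt, hDt, by linarith [hEt.1], by linarith [hEt.2]⟩

/-- For step sizes `α_k = Θ(1/(k+1))` and the window indices `s_t`,
one has `s_t = Θ((t+1)^{1/ζ})`, `a_t = Θ((t+1)^{-1})`, and `a_t = Θ(α_{s_t}^ζ)`. -/
theorem window_index_growth (ζ : ℝ) (hζ : ζ ∈ Set.Ioo (0 : ℝ) 1)
    (α : ℕ → ℝ) (hαpos : ∀ k, 0 < α k)
    (hΘ : ∃ c₁ c₂ : ℝ, 0 < c₁ ∧ c₁ ≤ c₂ ∧ ∀ k : ℕ,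
      c₁ / ((k : ℝ) + 1) ≤ α k ∧ α k ≤ c₂ / ((k : ℝ) + 1))
    (s : ℕ → ℕ) (hs0 : s 0 = 0)
    (hs : ∀ t, IsLeast
      {k : ℕ | s t < k ∧ (α (s t)) ^ ζ < ∑ i ∈ Finset.Icc (s t) k, α i} (s (t + 1)))
    (a : ℕ → ℝ) (ha : ∀ t, a t = ∑ k ∈ Finset.Ico (s t) (s (t + 1)), α k) :
    ∃ C₁ C₂ D₁ D₂ E₁ E₂ : ℝ,
      0 < C₁ ∧ C₁ ≤ C₂ ∧ 0 < D₁ ∧ D₁ ≤ D₂ ∧ 0 < E₁ ∧ E₁ ≤ E₂ ∧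
      ∃ T : ℕ, ∀ t ≥ T,
        (C₁ * ((t : ℝ) + 1) ^ (1 / ζ) ≤ (s t : ℝ) ∧
          (s t : ℝ) ≤ C₂ * ((t : ℝ) + 1) ^ (1 / ζ)) ∧
        (D₁ * ((t : ℝ) + 1)⁻¹ ≤ a t ∧ a t ≤ D₂ * ((t : ℝ) + 1)⁻¹) ∧
        (E₁ * (α (s t)) ^ ζ ≤ a t ∧ a t ≤ E₂ * (α (s t)) ^ ζ) :=
  window_index_growth_general ζ hζ α hαpos hΘ s hs a ha
end

section
/- Let ζ ∈ (0,1) and let (α_k)_{k∈ℕ} be positive reals with α_k = Θ((k+1)^{−1}). Define the window indices s_0 := 0 and s_{t+1} := the least k > s_t such that Σ_{i=s_t}^{k} α_i > α_{s_t}^{ζ}. Then the window lengths satisfy s_{t+1} − s_t = Θ((s_t + 1)^{1−ζ}); that is, there exist positive constants C₁ ≤ C₂ such that for all sufficiently large t, C₁(s_t+1)^{1−ζ} ≤ s_{t+1} − s_t ≤ C₂(s_t+1)^{1−ζ}. -/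
/-!
Write `x = s_t + 1` and `L = s_{t+1} - s_t`. For large `t` every step size in the window is
comparable to `1/x` from above and to `1/(s_t + L)` from below, while the threshold `α_{s_t}^ζ`
is comparable to `x^{-ζ}`. Minimality of `s_{t+1}` says that the window without its last term
sums to at most the threshold, giving `L / (s_t + L) ≲ x^{-ζ}`, hence `L ≲ x^{1-ζ}` once
`x^{-ζ}` is small; overshooting the threshold gives `x^{-ζ} ≲ (L + 1) / x`, hence `L ≳ x^{1-ζ}`.
Since `s_t ≥ t`, every largeness condition on `s_t` eventually holds.
-/

open Finset Filter Topology

namespace WindowLength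

theorem sum_Ico_le_of_isLeast {f : ℕ → ℝ} {θ : ℝ} {a b : ℕ}
    (hb : IsLeast {k | a < k ∧ θ < ∑ i ∈ Icc a k, f i} b) (ha : f a ≤ θ) :
    ∑ i ∈ Ico a b, f i ≤ θ := by
  obtain ⟨⟨hab, -⟩, hmin⟩ := hb
  by_contra! hlt
  have hIco : Ico a b = Icc a (b - 1) := by ext i; simp only [mem_Ico, mem_Icc]; omega
  rcases (Nat.le_sub_one_of_lt hab).eq_or_lt with hlast | hlast
  · rw [hIco, ← hlast, Icc_self, sum_singleton] at hlt
    exact hlt.not_ge ha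
  · have := hmin ⟨hlast, hIco ▸ hlt⟩
    omega

theorem rpow_div_mul_self {c x : ℝ} (hc : 0 ≤ c) (hx : 0 < x) (ζ : ℝ) :
    (c / x) ^ ζ * x = c ^ ζ * x ^ (1 - ζ) := by
  rw [Real.div_rpow hc hx.le, Real.rpow_sub hx, Real.rpow_one]
  field_simp

section StepSizes

variable {α : ℕ → ℝ} {c₁ c₂ : ℝ} {N a b : ℕ}

theorem sub_mul_div_le_sum_Ico
    (hα : ∀ k ≥ N, c₁ / ((k : ℝ) + 1) ≤ α k ∧ α k ≤ c₂ / ((k : ℝ) + 1))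
    (hc₁ : 0 ≤ c₁) (hNa : N ≤ a) (hab : a < b) :
    ((b : ℝ) - a) * (c₁ / b) ≤ ∑ i ∈ Ico a b, α i := by
  have hterm : ∀ i ∈ Ico a b, c₁ / b ≤ α i := by
    intro i hi
    obtain ⟨hai, hib⟩ := mem_Ico.mp hi
    have hib' : (i : ℝ) + 1 ≤ b := by exact_mod_cast hib
    exact (div_le_div_of_nonneg_left hc₁ (by positivity) hib').trans (hα i (hNa.trans hai)).1
  simpa [Nat.cast_sub hab.le] using card_nsmul_le_sum _ _ _ hterm

theorem sum_Icc_le_add_one_mul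
    (hα : ∀ k ≥ N, c₁ / ((k : ℝ) + 1) ≤ α k ∧ α k ≤ c₂ / ((k : ℝ) + 1))
    (hc₂ : 0 ≤ c₂) (hNa : N ≤ a) (hab : a ≤ b) :
    ∑ i ∈ Icc a b, α i ≤ ((b : ℝ) - a + 1) * (c₂ / ((a : ℝ) + 1)) := by
  have hterm : ∀ i ∈ Icc a b, α i ≤ c₂ / ((a : ℝ) + 1) := by
    intro i hi
    have hai := (mem_Icc.mp hi).1
    have hai' : (a : ℝ) + 1 ≤ i + 1 := by exact_mod_cast Nat.succ_le_succ hai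
    exact (hα i (hNa.trans hai)).2.trans (div_le_div_of_nonneg_left hc₂ (by positivity) hai')
  have hcard : ((#(Icc a b) : ℕ) : ℝ) = (b : ℝ) - a + 1 := by
    rw [Nat.card_Icc, Nat.cast_sub (by omega)]
    push_cast
    ring
  rw [← hcard, ← nsmul_eq_mul]
  exact sum_le_card_nsmul _ _ _ hterm

variable {ζ : ℝ}

theorem window_length_le
    (hα : ∀ k ≥ N, c₁ / ((k : ℝ) + 1) ≤ α k ∧ α k ≤ c₂ / ((k : ℝ) + 1))
    (hζ : ζ ∈ Set.Icc (0 : ℝ) 1) (hc₁ : 0 < c₁) (hNa : N ≤ a)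
    (hb : IsLeast {k | a < k ∧ α a ^ ζ < ∑ i ∈ Icc a k, α i} b)
    (hc₂a : c₂ ≤ (a : ℝ) + 1) (hsmall : (c₂ / ((a : ℝ) + 1)) ^ ζ ≤ c₁ / 2) :
    (b : ℝ) - a ≤ 2 * c₂ ^ ζ / c₁ * ((a : ℝ) + 1) ^ (1 - ζ) := by
  have hab : a < b := hb.1.1
  set x : ℝ := (a : ℝ) + 1
  set θ : ℝ := (c₂ / x) ^ ζ
  have hx : 0 < x := by positivity
  obtain ⟨hαa₁, hαa₂⟩ := hα a hNa
  have hαa : 0 < α a := (div_pos hc₁ hx).trans_le hαa₁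
  have hαa_le_one : α a ≤ 1 := hαa₂.trans ((div_le_one hx).mpr hc₂a)
  have hwindow : ((b : ℝ) - a) * (c₁ / b) ≤ θ :=
    calc ((b : ℝ) - a) * (c₁ / b) ≤ ∑ i ∈ Ico a b, α i :=
          sub_mul_div_le_sum_Ico hα hc₁.le hNa hab
      _ ≤ α a ^ ζ := sum_Ico_le_of_isLeast hb (Real.self_le_rpow_of_le_one hαa.le hαa_le_one hζ.2)
      _ ≤ θ := Real.rpow_le_rpow hαa.le hαa₂ hζ.1
  have hb_pos : (0 : ℝ) < b := by exact_mod_cast (Nat.zero_le a).trans_lt hab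
  have hL : (0 : ℝ) ≤ (b : ℝ) - a := by
    have : (a : ℝ) < b := by exact_mod_cast hab
    linarith
  rw [mul_div_assoc', div_le_iff₀ hb_pos] at hwindow
  -- `L c₁ ≤ θ (a + L) ≤ θ x + c₁ L / 2`
  have hhalf : ((b : ℝ) - a) * c₁ ≤ 2 * (θ * x) := by
    nlinarith [mul_le_mul_of_nonneg_left hsmall hL]
  have hc₂ : 0 ≤ c₂ := hc₁.le.trans ((div_le_div_iff_of_pos_right hx).mp (hαa₁.trans hαa₂))
  rw [show θ * x = c₂ ^ ζ * x ^ (1 - ζ) from rpow_div_mul_self hc₂ hx ζ] at hhalf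
  rw [div_mul_eq_mul_div, le_div_iff₀ hc₁]
  linarith

theorem le_window_length
    (hα : ∀ k ≥ N, c₁ / ((k : ℝ) + 1) ≤ α k ∧ α k ≤ c₂ / ((k : ℝ) + 1))
    (hζ : 0 ≤ ζ) (hc₁ : 0 < c₁) (hNa : N ≤ a)
    (hb : IsLeast {k | a < k ∧ α a ^ ζ < ∑ i ∈ Icc a k, α i} b)
    (hlarge : 2 * c₂ ≤ c₁ ^ ζ * ((a : ℝ) + 1) ^ (1 - ζ)) :
    c₁ ^ ζ / (2 * c₂) * ((a : ℝ) + 1) ^ (1 - ζ) ≤ (b : ℝ) - a := by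
  obtain ⟨⟨hab, hover⟩, -⟩ := hb
  set x : ℝ := (a : ℝ) + 1
  have hx : 0 < x := by positivity
  obtain ⟨hαa₁, hαa₂⟩ := hα a hNa
  have hc₂ : 0 < c₂ := hc₁.trans_le ((div_le_div_iff_of_pos_right hx).mp (hαa₁.trans hαa₂))
  have hovershoot : (c₁ / x) ^ ζ < ((b : ℝ) - a + 1) * (c₂ / x) :=
    calc (c₁ / x) ^ ζ ≤ α a ^ ζ := Real.rpow_le_rpow (by positivity) hαa₁ hζ
      _ < ∑ i ∈ Icc a b, α i := hover
      _ ≤ ((b : ℝ) - a + 1) * (c₂ / x) := sum_Icc_le_add_one_mul hα hc₂.le hNa hab.le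
  have hmul := mul_lt_mul_of_pos_right hovershoot hx
  rw [rpow_div_mul_self hc₁.le hx ζ, mul_assoc, div_mul_cancel₀ _ hx.ne'] at hmul
  rw [div_mul_eq_mul_div, div_le_iff₀ (by positivity)]
  nlinarith

end StepSizes

theorem eventually_window_conditions {ζ : ℝ} (hζ : ζ ∈ Set.Ioo (0 : ℝ) 1)
    {c₁ : ℝ} (hc₁ : 0 < c₁) (c₂ : ℝ) (N : ℕ) :
    ∀ᶠ a : ℕ in atTop, N ≤ a ∧ c₂ ≤ (a : ℝ) + 1 ∧ (c₂ / ((a : ℝ) + 1)) ^ ζ ≤ c₁ / 2 ∧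
      2 * c₂ ≤ c₁ ^ ζ * ((a : ℝ) + 1) ^ (1 - ζ) := by
  have hx : Tendsto (fun a : ℕ => (a : ℝ) + 1) atTop atTop :=
    tendsto_atTop_add_const_right _ _ tendsto_natCast_atTop_atTop
  have hθ : Tendsto (fun a : ℕ => (c₂ / ((a : ℝ) + 1)) ^ ζ) atTop (𝓝 0) := by
    simpa [Real.zero_rpow hζ.1.ne'] using
      (tendsto_const_nhds.div_atTop hx).rpow_const (Or.inr hζ.1.le)
  have hgrowth : Tendsto (fun a : ℕ => c₁ ^ ζ * ((a : ℝ) + 1) ^ (1 - ζ)) atTop atTop :=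
    ((tendsto_rpow_atTop (sub_pos.mpr hζ.2)).comp hx).const_mul_atTop (by positivity)
  filter_upwards [eventually_ge_atTop N, hx.eventually_ge_atTop c₂,
    (hθ.eventually_lt_const (half_pos hc₁)), hgrowth.eventually_ge_atTop (2 * c₂)]
    with a hNa hc₂a hsmall hlarge
  exact ⟨hNa, hc₂a, hsmall.le, hlarge⟩

end WindowLength

open WindowLength in
theorem window_length_growth_general (ζ : ℝ) (hζ : ζ ∈ Set.Ioo (0 : ℝ) 1)
    (α : ℕ → ℝ)
    (hΘ : ∃ c₁ c₂ : ℝ, ∃ N : ℕ, 0 < c₁ ∧ c₁ ≤ c₂ ∧ ∀ k ≥ N,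
      c₁ / ((k : ℝ) + 1) ≤ α k ∧ α k ≤ c₂ / ((k : ℝ) + 1))
    (s : ℕ → ℕ)
    (hs : ∀ t, IsLeast
      {k : ℕ | s t < k ∧ (α (s t)) ^ ζ < ∑ i ∈ Finset.Icc (s t) k, α i} (s (t + 1))) :
    ∃ C₁ C₂ : ℝ, 0 < C₁ ∧ C₁ ≤ C₂ ∧ ∃ T : ℕ, ∀ t ≥ T,
      C₁ * ((s t : ℝ) + 1) ^ (1 - ζ) ≤ (s (t + 1) : ℝ) - (s t : ℝ) ∧
      (s (t + 1) : ℝ) - (s t : ℝ) ≤ C₂ * ((s t : ℝ) + 1) ^ (1 - ζ) := by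
  obtain ⟨c₁, c₂, N, hc₁, hc₁₂, hα⟩ := hΘ
  have hc₂ : 0 < c₂ := hc₁.trans_le hc₁₂
  have hs_atTop : Tendsto s atTop atTop :=
    (strictMono_nat_of_lt_succ fun t => (hs t).1.1).tendsto_atTop
  obtain ⟨T, hT⟩ := eventually_atTop.mp
    (hs_atTop.eventually (eventually_window_conditions hζ hc₁ c₂ N))
  have hbounds : ∀ t ≥ T,
      c₁ ^ ζ / (2 * c₂) * ((s t : ℝ) + 1) ^ (1 - ζ) ≤ (s (t + 1) : ℝ) - (s t : ℝ) ∧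
      (s (t + 1) : ℝ) - (s t : ℝ) ≤ 2 * c₂ ^ ζ / c₁ * ((s t : ℝ) + 1) ^ (1 - ζ) := by
    intro t ht
    obtain ⟨hN, hc₂a, hsmall, hlarge⟩ := hT t ht
    exact ⟨le_window_length hα hζ.1.le hc₁ hN (hs t) hlarge,
      window_length_le hα (Set.Ioo_subset_Icc_self hζ) hc₁ hN (hs t) hc₂a hsmall⟩
  refine ⟨_, _, by positivity, ?_, T, hbounds⟩
  exact le_of_mul_le_mul_right ((hbounds T le_rfl).1.trans (hbounds T le_rfl).2) (by positivity)

/-- For step sizes `α_k = Θ(1/(k+1))` and the window indices `s_t`,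
the window lengths satisfy `s_{t+1} - s_t = Θ((s_t + 1)^{1-ζ})`. -/
theorem window_length_growth (ζ : ℝ) (hζ : ζ ∈ Set.Ioo (0 : ℝ) 1)
    (α : ℕ → ℝ) (hαpos : ∀ k, 0 < α k)
    (hΘ : ∃ c₁ c₂ : ℝ, ∃ N : ℕ, 0 < c₁ ∧ c₁ ≤ c₂ ∧ ∀ k ≥ N,
      c₁ / ((k : ℝ) + 1) ≤ α k ∧ α k ≤ c₂ / ((k : ℝ) + 1))
    (s : ℕ → ℕ) (hs0 : s 0 = 0)
    (hs : ∀ t, IsLeast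
      {k : ℕ | s t < k ∧ (α (s t)) ^ ζ < ∑ i ∈ Finset.Icc (s t) k, α i} (s (t + 1))) :
    ∃ C₁ C₂ : ℝ, 0 < C₁ ∧ C₁ ≤ C₂ ∧ ∃ T : ℕ, ∀ t ≥ T,
      C₁ * ((s t : ℝ) + 1) ^ (1 - ζ) ≤ (s (t + 1) : ℝ) - (s t : ℝ) ∧
      (s (t + 1) : ℝ) - (s t : ℝ) ≤ C₂ * ((s t : ℝ) + 1) ^ (1 - ζ) :=
  window_length_growth_general ζ hζ α hΘ s hs
end

section
/- Let ζ ∈ (0,1) and let (α_k)_{k∈ℕ} be positive reals with α_k = Θ((k+1)^{−1}). Define s_0 := 0 and s_{t+1} := the least k > s_t such that Σ_{i=s_t}^{k} α_i > α_{s_t}^{ζ}. Then Σ_{k=s_t}^{s_{t+1}−1} α_k² = O((t+1)^{−1−1/ζ}); that is, there exists C > 0 such that for all sufficiently large t, Σ_{k=s_t}^{s_{t+1}−1} α_k² ≤ C(t+1)^{−1−1/ζ}. -/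
/-!
Write `u_t = s_t + 1`. Minimality of `s_{t+1}` bounds the window sum `∑ α_k` by `α_{s_t}^ζ`,
so the windowed sum of squares is at most `max α_k · α_{s_t}^ζ ≲ u_t^{-(1+ζ)}`. Conversely, the
window has to collect more than `α_{s_t}^ζ ≳ u_t^{-ζ}` from terms of size `≲ 1/u_t`, so its
length is `≳ u_t^{1-ζ}`; by concavity of `x ↦ x^ζ` this raises `u_t^ζ` by a fixed amount per
window, whence `u_t^ζ ≳ t`.
-/

open Filter Finset

theorem Real.one_add_mul_le_one_add_rpow {p x : ℝ} (hp₀ : 0 ≤ p) (hp₁ : p ≤ 1)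
    (hx₀ : 0 ≤ x) (hx₁ : x ≤ 1) : 1 + (2 ^ p - 1) * x ≤ (1 + x) ^ p := by
  have h := (Real.concaveOn_rpow hp₀ hp₁).2 (Set.mem_Ici.2 zero_le_one)
    (Set.mem_Ici.2 zero_le_two) (sub_nonneg.2 hx₁) hx₀ (sub_add_cancel 1 x)
  simp only [smul_eq_mul, Real.one_rpow, mul_one] at h
  rw [show 1 - x + x * 2 = 1 + x by ring] at h
  linarith

theorem Real.rpow_add_mul_le_rpow_of_le {p a u v : ℝ} (hp₀ : 0 ≤ p) (hp₁ : p ≤ 1)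
    (hu : 0 < u) (ha₀ : 0 ≤ a) (ha : a ≤ u ^ p) (hv : u + a * u ^ (1 - p) ≤ v) :
    u ^ p + (2 ^ p - 1) * a ≤ v ^ p := by
  have hup : 0 < u ^ p := Real.rpow_pos_of_pos hu p
  have hux : u * (1 + a / u ^ p) = u + a * u ^ (1 - p) := by
    rw [Real.rpow_sub hu, Real.rpow_one]; field_simp
  calc u ^ p + (2 ^ p - 1) * a = u ^ p * (1 + (2 ^ p - 1) * (a / u ^ p)) := by
        field_simp
    _ ≤ u ^ p * (1 + a / u ^ p) ^ p := by
      gcongr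
      exact Real.one_add_mul_le_one_add_rpow hp₀ hp₁ (by positivity)
        ((div_le_one hup).2 ha)
    _ = (u + a * u ^ (1 - p)) ^ p := by rw [← hux, Real.mul_rpow hu.le (by positivity)]
    _ ≤ v ^ p := by gcongr

theorem Real.div_rpow_one_add_le {c κ ζ u x : ℝ} (hc : 0 ≤ c) (hκ : 0 < κ) (hζ : 0 < ζ)
    (hu : 0 < u) (hx : 0 < x) (h : κ * x ≤ u ^ ζ) :
    (c / u) ^ (1 + ζ) ≤ c ^ (1 + ζ) * κ ^ (-(1 + 1 / ζ)) * x ^ (-(1 + 1 / ζ)) := by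
  have hexp : (c / u) ^ (1 + ζ) = c ^ (1 + ζ) * (u ^ ζ) ^ (-(1 + 1 / ζ)) := by
    rw [Real.div_rpow hc hu.le, ← Real.rpow_mul hu.le, div_eq_mul_inv, ← Real.rpow_neg hu.le]
    congr 2
    field_simp
    ring
  rw [hexp, mul_assoc, ← Real.mul_rpow hκ.le hx.le]
  refine mul_le_mul_of_nonneg_left (Real.rpow_le_rpow_of_nonpos (by positivity) h ?_)
    (by positivity)
  have := one_div_pos.2 hζ
  linarith

theorem eventually_mul_le_of_eventually_add_le {g : ℕ → ℝ} {δ : ℝ} (hδ : 0 < δ)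
    (h : ∀ᶠ t in atTop, g t + δ ≤ g (t + 1)) :
    ∀ᶠ t : ℕ in atTop, δ / 2 * ((t : ℝ) + 1) ≤ g t := by
  obtain ⟨T, hT⟩ := eventually_atTop.1 h
  have hlin : ∀ n : ℕ, g T + δ * n ≤ g (T + n) := by
    intro n
    induction n with
    | zero => simp
    | succ n ih =>
      have := hT (T + n) (Nat.le_add_right T n)
      rw [← add_assoc]
      push_cast
      linarith
  filter_upwards [eventually_ge_atTop T,
    tendsto_natCast_atTop_atTop.eventually_ge_atTop (2 * T + 1 - 2 * g T / δ)]
    with t hTt ht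
  obtain ⟨n, rfl⟩ := Nat.exists_eq_add_of_le hTt
  have hn := hlin n
  have hTn : 2 * T + 1 - 2 * g T / δ ≤ T + n := by exact_mod_cast ht
  have := mul_le_mul_of_nonneg_left hTn (half_pos hδ).le
  rw [mul_sub, show δ / 2 * (2 * g T / δ) = g T by field_simp] at this
  push_cast
  linarith

theorem eventually_rpow_add_le_rpow_succ {u : ℕ → ℝ} {ζ c : ℝ} (hζ₀ : 0 < ζ) (hζ₁ : ζ < 1)
    (hc : 0 < c) (hu : Tendsto u atTop atTop)
    (hstep : ∀ᶠ t in atTop, c * u t ^ (1 - ζ) < u (t + 1) - u t + 1) :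
    ∀ᶠ t in atTop, u t ^ ζ + (2 ^ ζ - 1) * (c / 2) ≤ u (t + 1) ^ ζ := by
  filter_upwards [hstep, hu.eventually_gt_atTop 0,
    ((tendsto_rpow_atTop (sub_pos.2 hζ₁)).comp hu).eventually_ge_atTop (2 / c),
    ((tendsto_rpow_atTop hζ₀).comp hu).eventually_ge_atTop (c / 2)]
    with t hstep hpos hbig hpow
  refine Real.rpow_add_mul_le_rpow_of_le hζ₀.le hζ₁.le hpos (by positivity) hpow ?_
  have : 2 ≤ c * u t ^ (1 - ζ) := by
    rwa [Function.comp_apply, div_le_iff₀ hc, mul_comm] at hbig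
  linarith

theorem exists_pos_eventually_mul_le_rpow {u : ℕ → ℝ} {ζ c : ℝ} (hζ₀ : 0 < ζ) (hζ₁ : ζ < 1)
    (hc : 0 < c) (hu : Tendsto u atTop atTop)
    (hstep : ∀ᶠ t in atTop, c * u t ^ (1 - ζ) < u (t + 1) - u t + 1) :
    ∃ κ > 0, ∀ᶠ t : ℕ in atTop, κ * ((t : ℝ) + 1) ≤ u t ^ ζ := by
  have h2 : 1 < (2 : ℝ) ^ ζ := Real.one_lt_rpow one_lt_two hζ₀
  have hδ : 0 < (2 ^ ζ - 1) * (c / 2) := mul_pos (sub_pos.2 h2) (half_pos hc)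
  exact ⟨_, half_pos hδ, eventually_mul_le_of_eventually_add_le hδ
    (eventually_rpow_add_le_rpow_succ hζ₀ hζ₁ hc hu hstep)⟩

theorem sum_Ico_le_of_isLeast {f : ℕ → ℝ} {a m : ℕ} {c : ℝ} (hfa : f a ≤ c)
    (h : IsLeast {k | a < k ∧ c < ∑ i ∈ Icc a k, f i} m) : ∑ i ∈ Ico a m, f i ≤ c := by
  have ham : a < m := h.1.1
  rw [← Icc_sub_one_right_eq_Ico_of_not_isMin (by simp; omega)]
  rcases (Nat.le_sub_one_of_lt ham).eq_or_lt with heq | hlt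
  · rwa [← heq, Icc_self, sum_singleton]
  · exact not_lt.1 fun hc => absurd (h.2 ⟨hlt, hc⟩) (by omega)

theorem lt_window_length {α : ℕ → ℝ} {ζ c₁ c₂ : ℝ} {a m : ℕ} (hζ : 0 ≤ ζ) (hc₁ : 0 < c₁)
    (hc₂ : 0 < c₂) (hlow : c₁ / ((a : ℝ) + 1) ≤ α a)
    (hup : ∀ k ≥ a, α k ≤ c₂ / ((k : ℝ) + 1)) (ham : a < m)
    (h : α a ^ ζ < ∑ i ∈ Icc a m, α i) :
    c₁ ^ ζ / c₂ * ((a : ℝ) + 1) ^ (1 - ζ) < ((m : ℝ) + 1) - ((a : ℝ) + 1) + 1 := by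
  set u : ℝ := (a : ℝ) + 1
  set L : ℝ := ((m : ℝ) + 1) - u + 1
  have hu : 0 < u := by positivity
  have hsum : ∑ i ∈ Icc a m, α i ≤ L * (c₂ / u) := by
    have hle : ∀ k ∈ Icc a m, α k ≤ c₂ / u := fun k hk => by
      have hak : (a : ℝ) ≤ k := by exact_mod_cast (mem_Icc.1 hk).1
      refine (hup k (mem_Icc.1 hk).1).trans ?_
      gcongr
      linarith
    refine (sum_le_card_nsmul _ _ _ hle).trans_eq ?_
    rw [Nat.card_Icc, nsmul_eq_mul, Nat.cast_sub (by omega)]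
    push_cast
    ring
  have hpow : (c₁ / u) ^ ζ ≤ α a ^ ζ := Real.rpow_le_rpow (by positivity) hlow hζ
  have key := hpow.trans_lt (h.trans_le hsum)
  rw [Real.div_rpow hc₁.le hu.le, div_lt_iff₀ (by positivity)] at key
  rw [Real.rpow_sub hu, Real.rpow_one, div_mul_div_comm, div_lt_iff₀ (by positivity)]
  calc c₁ ^ ζ * u < L * (c₂ / u) * u ^ ζ * u := by gcongr
    _ = L * (c₂ * u ^ ζ) := by field_simp

theorem sum_sq_Ico_le_of_isLeast {α : ℕ → ℝ} {ζ c₂ : ℝ} {a m : ℕ} (hα : ∀ k, 0 < α k)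
    (hζ₀ : 0 ≤ ζ) (hζ₁ : ζ ≤ 1) (hup : ∀ k ≥ a, α k ≤ c₂ / ((k : ℝ) + 1))
    (hc₂ : c₂ ≤ (a : ℝ) + 1)
    (h : IsLeast {k | a < k ∧ α a ^ ζ < ∑ i ∈ Icc a k, α i} m) :
    ∑ k ∈ Ico a m, α k ^ 2 ≤ (c₂ / ((a : ℝ) + 1)) ^ (1 + ζ) := by
  set B := c₂ / ((a : ℝ) + 1)
  have hB₀ : 0 < B := (hα a).trans_le (hup a le_rfl)
  have hc₂₀ : 0 < c₂ := (div_pos_iff_of_pos_right (by positivity)).1 hB₀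
  have hB : ∀ k ∈ Ico a m, α k ≤ B := fun k hk => by
    refine (hup k (mem_Ico.1 hk).1).trans ?_
    unfold B
    gcongr
    exact_mod_cast (mem_Ico.1 hk).1
  have hαa : α a ≤ 1 := (hup a le_rfl).trans ((div_le_one (by positivity)).2 hc₂)
  calc ∑ k ∈ Ico a m, α k ^ 2 ≤ ∑ k ∈ Ico a m, B * α k :=
        sum_le_sum fun k hk => by rw [sq]; gcongr; exacts [(hα k).le, hB k hk]
    _ = B * ∑ k ∈ Ico a m, α k := (mul_sum _ _ _).symm
    _ ≤ B * α a ^ ζ := by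
        gcongr
        exact sum_Ico_le_of_isLeast (Real.self_le_rpow_of_le_one (hα a).le hαa hζ₁) h
    _ ≤ B * B ^ ζ := by gcongr; exacts [(hα a).le, hup a le_rfl]
    _ = B ^ (1 + ζ) := by rw [Real.rpow_add hB₀, Real.rpow_one]

theorem windowed_squared_stepsize_bound_general (ζ : ℝ) (hζ : ζ ∈ Set.Ioo (0 : ℝ) 1)
    (α : ℕ → ℝ) (hαpos : ∀ k, 0 < α k)
    (hΘ : ∃ c₁ c₂ : ℝ, ∃ N : ℕ, 0 < c₁ ∧ c₁ ≤ c₂ ∧ ∀ k ≥ N,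
      c₁ / ((k : ℝ) + 1) ≤ α k ∧ α k ≤ c₂ / ((k : ℝ) + 1))
    (s : ℕ → ℕ)
    (hs : ∀ t, IsLeast
      {k : ℕ | s t < k ∧ (α (s t)) ^ ζ < ∑ i ∈ Finset.Icc (s t) k, α i} (s (t + 1))) :
    ∃ C > (0 : ℝ), ∃ T : ℕ, ∀ t ≥ T,
      ∑ k ∈ Finset.Ico (s t) (s (t + 1)), (α k) ^ 2 ≤
        C * ((t : ℝ) + 1) ^ (-(1 + 1 / ζ)) := by
  obtain ⟨hζ₀, hζ₁⟩ := hζ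
  obtain ⟨c₁, c₂, N, hc₁, hc₁₂, hΘ⟩ := hΘ
  have hc₂ : 0 < c₂ := hc₁.trans_le hc₁₂
  have hs_tendsto : Tendsto s atTop atTop :=
    (strictMono_nat_of_lt_succ fun t => (hs t).1.1).tendsto_atTop
  have hu : Tendsto (fun t => (s t : ℝ) + 1) atTop atTop :=
    tendsto_atTop_add_const_right _ 1 (tendsto_natCast_atTop_atTop.comp hs_tendsto)
  have hlarge : ∀ᶠ t in atTop, N ≤ s t ∧ c₂ ≤ (s t : ℝ) + 1 :=
    (hs_tendsto.eventually_ge_atTop N).and (hu.eventually_ge_atTop c₂)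
  have hup : ∀ t, N ≤ s t → ∀ k ≥ s t, α k ≤ c₂ / ((k : ℝ) + 1) :=
    fun t hN k hk => (hΘ k (hN.trans hk)).2
  obtain ⟨κ, hκ, hgrowth⟩ := exists_pos_eventually_mul_le_rpow hζ₀ hζ₁
    (div_pos (Real.rpow_pos_of_pos hc₁ ζ) hc₂) hu <| hlarge.mono fun t ⟨hN, _⟩ =>
      lt_window_length hζ₀.le hc₁ hc₂ (hΘ (s t) hN).1 (hup t hN) (hs t).1.1 (hs t).1.2
  refine ⟨c₂ ^ (1 + ζ) * κ ^ (-(1 + 1 / ζ)), by positivity, eventually_atTop.1 ?_⟩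
  filter_upwards [hlarge, hgrowth] with t ⟨hN, hc₂t⟩ ht
  exact (sum_sq_Ico_le_of_isLeast hαpos hζ₀.le hζ₁.le (hup t hN) hc₂t (hs t)).trans
    (Real.div_rpow_one_add_le hc₂.le hκ hζ₀ (by positivity) (by positivity) ht)

/-- For step sizes `α_k = Θ(1/(k+1))` and the window indices `s_t`,
the windowed sum of squared step sizes satisfies
`Σ_{k=s_t}^{s_{t+1}-1} α_k² = O((t+1)^{-1-1/ζ})`. -/
theorem windowed_squared_stepsize_bound (ζ : ℝ) (hζ : ζ ∈ Set.Ioo (0 : ℝ) 1)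
    (α : ℕ → ℝ) (hαpos : ∀ k, 0 < α k)
    (hΘ : ∃ c₁ c₂ : ℝ, ∃ N : ℕ, 0 < c₁ ∧ c₁ ≤ c₂ ∧ ∀ k ≥ N,
      c₁ / ((k : ℝ) + 1) ≤ α k ∧ α k ≤ c₂ / ((k : ℝ) + 1))
    (s : ℕ → ℕ) (hs0 : s 0 = 0)
    (hs : ∀ t, IsLeast
      {k : ℕ | s t < k ∧ (α (s t)) ^ ζ < ∑ i ∈ Finset.Icc (s t) k, α i} (s (t + 1))) :
    ∃ C > (0 : ℝ), ∃ T : ℕ, ∀ t ≥ T,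
      ∑ k ∈ Finset.Ico (s t) (s (t + 1)), (α k) ^ 2 ≤
        C * ((t : ℝ) + 1) ^ (-(1 + 1 / ζ)) :=
  windowed_squared_stepsize_bound_general ζ hζ α hαpos hΘ s hs
end

section
/- Let κ ∈ (0,1), ζ ∈ (0,1), and let (α_k)_{k∈ℕ} be positive reals with α_k = Θ((k+1)^{−1}). Define b_k := Σ_{i=0}^{k} κ^{k−i} α_i, b_{−1} := 0, T(k) := the least i ≤ k such that κ^{k−j} b_j ≥ b_k^{1+ζ} for all j ∈ [i, k], and a_k := Σ_{i=T(k)}^{k} κ^{k−i} α_i. Then for all sufficiently large k: (1) b_k/2 ≤ a_k ≤ b_k, and (2) the discarded tail satisfies Σ_{i=0}^{T(k)−1} κ^{k−i} α_i = κ^{k−T(k)+1} b_{T(k)−1} < b_k^{1+ζ}. -/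
/-!
The weights `α_k ~ 1/k` tend to zero, hence so does their geometrically discounted sum `b_k`
(Tannery's theorem, dominated by `|κ|^j sup |α|`). Once `b_k^ζ ≤ 1/2` the index `j = k` qualifies,
so `T(k) ≤ k`, and minimality of `T(k)` says that `j = T(k) - 1` fails the window condition. The
discarded tail is exactly `κ^{k-T(k)+1} b_{T(k)-1}`, so it is `< b_k^{1+ζ} ≤ b_k/2`, and
`a_k = b_k - tail` lies in `[b_k/2, b_k]`.
-/

open Filter Topology Finset

noncomputable section

def discountedSum (κ : ℝ) (α : ℕ → ℝ) (k : ℕ) : ℝ :=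
  ∑ i ∈ range (k + 1), κ ^ (k - i) * α i

theorem discountedSum_pos {κ : ℝ} {α : ℕ → ℝ} (hκ : 0 < κ) (hα : ∀ i, 0 < α i) (k : ℕ) :
    0 < discountedSum κ α k :=
  sum_pos (fun i _ => mul_pos (pow_pos hκ _) (hα i)) nonempty_range_add_one

theorem discountedSum_eq_tsum (κ : ℝ) (α : ℕ → ℝ) (k : ℕ) :
    discountedSum κ α k = ∑' j, if j ≤ k then κ ^ j * α (k - j) else 0 := by
  rw [tsum_eq_sum (s := range (k + 1)) fun j hj => if_neg (by simpa [Nat.lt_succ_iff] using hj),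
    discountedSum, ← sum_range_reflect]
  refine sum_congr rfl fun j hj => ?_
  rw [if_pos (Nat.lt_succ_iff.1 (mem_range.1 hj)), add_tsub_cancel_right, Nat.sub_sub_self
    (Nat.lt_succ_iff.1 (mem_range.1 hj))]

theorem tendsto_discountedSum_zero {κ : ℝ} (hκ : |κ| < 1) {α : ℕ → ℝ}
    (hα : Tendsto α atTop (𝓝 0)) : Tendsto (discountedSum κ α) atTop (𝓝 0) := by
  obtain ⟨M, hM⟩ := hα.norm.bddAbove_range
  have hterm (j : ℕ) :
      Tendsto (fun k => if j ≤ k then κ ^ j * α (k - j) else 0) atTop (𝓝 0) := by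
    have hshift : Tendsto (fun k => κ ^ j * α (k - j)) atTop (𝓝 0) := by
      simpa using (hα.comp (tendsto_sub_atTop_nat j)).const_mul (κ ^ j)
    refine hshift.congr' ?_
    filter_upwards [eventually_ge_atTop j] with k hk using (if_pos hk).symm
  have hbound : ∀ k j, ‖if j ≤ k then κ ^ j * α (k - j) else 0‖ ≤ |κ| ^ j * M := by
    intro k j
    have hM0 : 0 ≤ M := (norm_nonneg _).trans (hM ⟨0, rfl⟩)
    split_ifs
    · rw [norm_mul, norm_pow, Real.norm_eq_abs]
      exact mul_le_mul_of_nonneg_left (hM ⟨k - j, rfl⟩) (by positivity)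
    · simpa using mul_nonneg (pow_nonneg (abs_nonneg κ) j) hM0
  have := tendsto_tsum_of_dominated_convergence
    ((summable_geometric_of_lt_one (abs_nonneg κ) hκ).mul_right M) hterm
    (Eventually.of_forall (hbound ·))
  rw [funext (discountedSum_eq_tsum κ α)]
  simpa using this

theorem sum_range_pow_sub_mul_eq {κ : ℝ} {α : ℕ → ℝ} {t k : ℕ} (htk : t ≤ k) :
    ∑ i ∈ range t, κ ^ (k - i) * α i =
      κ ^ (k - t + 1) * (if t = 0 then 0 else discountedSum κ α (t - 1)) := by
  cases t with
  | zero => simp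
  | succ s =>
    rw [if_neg s.succ_ne_zero, add_tsub_cancel_right, discountedSum, mul_sum]
    refine sum_congr rfl fun i hi => ?_
    rw [← mul_assoc, ← pow_add]
    congr 2
    have := mem_range.1 hi
    omega

theorem tendsto_zero_of_le_const_div_succ {α : ℕ → ℝ} {c : ℝ} (hα : ∀ k, 0 ≤ α k)
    (hle : ∀ᶠ k in atTop, α k ≤ c / ((k : ℝ) + 1)) : Tendsto α atTop (𝓝 0) := by
  have hc : Tendsto (fun k : ℕ => c / ((k : ℝ) + 1)) atTop (𝓝 0) := by
    simpa [div_eq_mul_inv] using tendsto_one_div_add_atTop_nhds_zero_nat.const_mul c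
  exact tendsto_of_tendsto_of_tendsto_of_le_of_le' tendsto_const_nhds hc
    (Eventually.of_forall hα) hle

theorem eventually_rpow_one_add_le_half {ζ : ℝ} (hζ : 0 < ζ) :
    ∀ᶠ x in 𝓝[≥] (0 : ℝ), x ^ (1 + ζ) ≤ x / 2 := by
  have hcont : Tendsto (· ^ ζ) (𝓝 (0 : ℝ)) (𝓝 0) := by
    have := (Real.continuousAt_rpow_const 0 ζ (Or.inr hζ.le)).tendsto
    rwa [Real.zero_rpow hζ.ne'] at this
  filter_upwards [nhdsWithin_le_nhds (hcont.eventually (ge_mem_nhds one_half_pos)),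
    self_mem_nhdsWithin] with x hx hx0
  rw [Real.rpow_add' hx0 (by linarith), Real.rpow_one]
  nlinarith [Set.mem_Ici.1 hx0]

section Window

variable {P : ℕ → Prop} {k : ℕ}

theorem sInf_window_le (hk : P k) :
    sInf {i : ℕ | i ≤ k ∧ ∀ j, i ≤ j → j ≤ k → P j} ≤ k :=
  Nat.sInf_le ⟨le_rfl, fun _ h₁ h₂ => le_antisymm h₂ h₁ ▸ hk⟩

theorem not_of_sInf_window_eq_succ {s : ℕ}
    (hs : sInf {i : ℕ | i ≤ k ∧ ∀ j, i ≤ j → j ≤ k → P j} = s + 1) : ¬P s := by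
  intro hPs
  have hmem := Nat.sInf_mem (Nat.nonempty_of_pos_sInf (by rw [hs]; exact s.succ_pos))
  rw [hs] at hmem
  obtain ⟨hsk, hsuffix⟩ := hmem
  refine Nat.notMem_of_lt_sInf (by rw [hs]; exact s.lt_succ_self)
    (show s ∈ {i : ℕ | i ≤ k ∧ ∀ j, i ≤ j → j ≤ k → P j} from ⟨by omega, fun j h₁ h₂ => ?_⟩)
  rcases h₁.eq_or_lt with rfl | hlt
  · exact hPs
  · exact hsuffix j hlt h₂

end Window

theorem sum_range_add_sum_Icc_eq_discountedSum {κ : ℝ} {α : ℕ → ℝ} {t k : ℕ} (htk : t ≤ k) :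
    ∑ i ∈ range t, κ ^ (k - i) * α i + ∑ i ∈ Icc t k, κ ^ (k - i) * α i =
      discountedSum κ α k := by
  rw [discountedSum, ← Ico_add_one_right_eq_Icc]
  exact sum_range_add_sum_Ico _ (by omega)

theorem sum_range_lt_of_eq_sInf_window {κ c : ℝ} {α : ℕ → ℝ} {t k : ℕ} (hc : 0 < c)
    (htk : t ≤ k) (ht : t = sInf {i : ℕ | i ≤ k ∧ ∀ j, i ≤ j → j ≤ k →
      c ≤ κ ^ (k - j) * discountedSum κ α j}) :
    ∑ i ∈ range t, κ ^ (k - i) * α i < c := by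
  rw [sum_range_pow_sub_mul_eq htk]
  cases t with
  | zero => simpa using hc
  | succ s =>
    rw [if_neg s.succ_ne_zero, add_tsub_cancel_right, show k - (s + 1) + 1 = k - s by omega]
    exact not_le.1 (not_of_sInf_window_eq_succ ht.symm)

end

/-- For the momentum method's exponentially weighted steps `b_k`, the
recent-window index `T(k)`, and `a_k = Σ_{i=T(k)}^k κ^{k-i} α_i`, for all sufficiently
large `k` one has `b_k/2 ≤ a_k ≤ b_k`, and the discarded tail equals
`κ^{k-T(k)+1} b_{T(k)-1}` and is `< b_k^{1+ζ}`. -/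
theorem momentum_window_estimates (κ ζ : ℝ)
    (hκ : κ ∈ Set.Ioo (0 : ℝ) 1) (hζ : ζ ∈ Set.Ioo (0 : ℝ) 1)
    (α : ℕ → ℝ) (hαpos : ∀ k, 0 < α k)
    (hΘ : ∃ c₁ c₂ : ℝ, ∃ N : ℕ, 0 < c₁ ∧ c₁ ≤ c₂ ∧ ∀ k ≥ N,
      c₁ / ((k : ℝ) + 1) ≤ α k ∧ α k ≤ c₂ / ((k : ℝ) + 1))
    (b : ℕ → ℝ) (hb : ∀ k, b k = ∑ i ∈ Finset.range (k + 1), κ ^ (k - i) * α i)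
    (T : ℕ → ℕ)
    (hT : ∀ k, T k = sInf {i : ℕ | i ≤ k ∧ ∀ j, i ≤ j → j ≤ k →
      b k ^ (1 + ζ) ≤ κ ^ (k - j) * b j})
    (a : ℕ → ℝ) (ha : ∀ k, a k = ∑ i ∈ Finset.Icc (T k) k, κ ^ (k - i) * α i) :
    ∃ K : ℕ, ∀ k ≥ K,
      (b k / 2 ≤ a k ∧ a k ≤ b k) ∧
      (∑ i ∈ Finset.range (T k), κ ^ (k - i) * α i) =
        κ ^ (k - T k + 1) * (if T k = 0 then 0 else b (T k - 1)) ∧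
      (∑ i ∈ Finset.range (T k), κ ^ (k - i) * α i) < b k ^ (1 + ζ) := by
  obtain ⟨c₁, c₂, N, -, -, hc⟩ := hΘ
  obtain rfl : b = discountedSum κ α := funext hb
  have hbpos := discountedSum_pos hκ.1 hαpos
  have hαlim : Tendsto α atTop (𝓝 0) := tendsto_zero_of_le_const_div_succ (hαpos · |>.le)
    (eventually_atTop.2 ⟨N, fun k hk => (hc k hk).2⟩)
  have hblim := tendsto_discountedSum_zero (by rw [abs_of_pos hκ.1]; exact hκ.2) hαlim
  obtain ⟨K, hK⟩ := eventually_atTop.1 <| (tendsto_nhdsWithin_iff.2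
    ⟨hblim, Eventually.of_forall (hbpos · |>.le)⟩).eventually (eventually_rpow_one_add_le_half hζ.1)
  refine ⟨K, fun k hk => ?_⟩
  have hsmall : discountedSum κ α k ^ (1 + ζ) ≤ discountedSum κ α k / 2 := hK k hk
  have hTk : T k ≤ k :=
    hT k ▸ sInf_window_le (by simpa using hsmall.trans (half_le_self (hbpos k).le))
  have htail_lt := sum_range_lt_of_eq_sInf_window (Real.rpow_pos_of_pos (hbpos k) _) hTk (hT k)
  have htail_nonneg : 0 ≤ ∑ i ∈ range (T k), κ ^ (k - i) * α i :=
    sum_nonneg fun i _ => (mul_pos (pow_pos hκ.1 _) (hαpos i)).le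
  have hsplit := sum_range_add_sum_Icc_eq_discountedSum (κ := κ) (α := α) hTk
  rw [← ha k] at hsplit
  exact ⟨⟨by linarith, by linarith⟩, sum_range_pow_sub_mul_eq hTk, htail_lt⟩
end

section
/- Let X ⊂ ℝⁿ be compact, let (x_k)_{k∈ℕ} ⊂ X with |x_{k+1} − x_k| → 0, and let f : ℝⁿ → ℝ be L-Lipschitz on X for some L > 0. Let y ∈ ℝ, θ₀ ∈ (0,1), ε > 0, ς > 0, and define Φ(x) := sgn(f(x) − y)·|f(x) − y|^{1−θ₀}. Assume: (i) the sequence (x_k) has a cluster point x* with f(x*) = y; and (ii) the band criterion holds: for every δ > 0 there exists K ∈ ℕ such that for all k₁, k₂ with K ≤ k₁ < k₂ and x_m ∈ X with |f(x_m) − y| ≤ 2ε for every m ∈ {k₁, …, k₂}, one has diam(x_{⟦k₁,k₂⟧}) + ς(Φ(x_{k₂}) − Φ(x_{k₁})) ≤ δ. Then the sequence (x_k)_{k∈ℕ} converges. -/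
/-!
Write `u k = f (x k) - y` and `g = ς · sgn(·) |·|^(1-θ₀)`, which is strictly increasing, so
that `ς Φ(x k) = g (u k)`. Along a stretch inside the band `|u| ≤ 2ε` the band criterion lets
`g ∘ u` increase by at most `δ`, so with small steps `u` cannot cross `[ε, 2ε]` or `[-2ε, -ε]`
upwards. Since `u` returns to `[-ε, ε]` infinitely often (near the cluster point `x*`), it
eventually stays in the band. Between two late visits `t₀ < t` near `x*` the band criterion
then bounds `diam x⟦t₀, t⟧` by `δ + g (u t₀) - g (u t)`, which is small, so `x → x*`.
-/

open Filter Set Topology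

noncomputable def signPow (e t : ℝ) : ℝ := Real.sign t * |t| ^ e

theorem signPow_neg (e t : ℝ) : signPow e (-t) = -signPow e t := by
  simp [signPow, Real.sign_neg]

theorem signPow_of_nonneg {e t : ℝ} (he : 0 < e) (ht : 0 ≤ t) : signPow e t = t ^ e := by
  rcases ht.eq_or_lt with rfl | ht
  · simp [signPow, Real.zero_rpow he.ne']
  · rw [signPow, Real.sign_of_pos ht, one_mul, abs_of_pos ht]

theorem abs_signPow_le (e t : ℝ) : |signPow e t| ≤ |t| ^ e := by
  have hsign : |Real.sign t| ≤ 1 := by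
    rcases Real.sign_apply_eq t with h | h | h <;> simp [h]
  rw [signPow, abs_mul, abs_of_nonneg (Real.rpow_nonneg (abs_nonneg t) e)]
  exact mul_le_of_le_one_left (Real.rpow_nonneg (abs_nonneg t) e) hsign

theorem strictMono_signPow {e : ℝ} (he : 0 < e) : StrictMono (signPow e) :=
  strictMono_of_odd_strictMonoOn_nonneg (signPow_neg e) fun s hs t ht hst => by
    rw [signPow_of_nonneg he hs, signPow_of_nonneg he ht]
    exact Real.rpow_lt_rpow hs hst he

theorem tendsto_signPow_zero {e : ℝ} (he : 0 < e) : Tendsto (signPow e) (𝓝 0) (𝓝 0) := by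
  have : Tendsto (fun t : ℝ => |t| ^ e) (𝓝 0) (𝓝 0) := by
    simpa [Real.zero_rpow he.ne'] using (continuous_abs.tendsto 0).rpow_const (Or.inr he.le)
  exact squeeze_zero_norm (abs_signPow_le e) this

theorem exists_last_mem_Icc {P : ℕ → Prop} {a b : ℕ} (hab : a ≤ b) (ha : P a) :
    ∃ r ∈ Icc a b, P r ∧ ∀ m, r < m → m ≤ b → ¬ P m := by
  classical
  have hspec := Nat.findGreatest_spec (P := fun m => a ≤ m ∧ P m) hab ⟨le_rfl, ha⟩
  exact ⟨_, ⟨hspec.1, Nat.findGreatest_le b⟩, hspec.2, fun m hrm hmb hm =>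
    Nat.findGreatest_is_greatest hrm hmb ⟨hspec.1.trans hrm.le, hm⟩⟩

theorem dist_le_diam_image_Icc {E : Type*} [PseudoMetricSpace E] (x : ℕ → E) {a k b : ℕ}
    (hak : a ≤ k) (hkb : k ≤ b) : dist (x k) (x a) ≤ Metric.diam (x '' Icc a b) :=
  Metric.dist_le_diam_of_mem ((finite_Icc a b).image x).isBounded
    (mem_image_of_mem x ⟨hak, hkb⟩) (mem_image_of_mem x ⟨le_rfl, hak.trans hkb⟩)

/-- Between its last visit to `(-∞, α]` and its first visit to `[β, ∞)`, the sequence would stay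
in `(α, β)` while climbing from at most `α + s` to at least `β - s`. -/
theorem lt_of_no_upcrossing {u : ℕ → ℝ} {g : ℝ → ℝ} (hg : Monotone g) {M a : ℕ}
    {s α β δ : ℝ} (hs : 0 ≤ s) (hαβ : α + s < β - s)
    (hstep : ∀ k ≥ M, u (k + 1) ≤ u k + s)
    (hband : ∀ i j, M ≤ i → i < j → (∀ m ∈ Icc i j, u m ∈ Icc α β) →
      g (u j) - g (u i) ≤ δ)
    (hgap : δ < g (β - s) - g (α + s)) (hMa : M ≤ a) (hua : u a ≤ α) :
    ∀ b ≥ a, u b < β := by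
  intro b hab
  induction b using Nat.strong_induction_on with
  | _ b ih =>
  by_contra! hub
  obtain ⟨r, ⟨har, hrb⟩, hur, hlast⟩ := exists_last_mem_Icc (P := fun m => u m ≤ α) hab hua
  have hrb' : r < b := hrb.lt_of_ne (by rintro rfl; linarith)
  obtain ⟨j, rfl⟩ : ∃ j, b = j + 1 := ⟨b - 1, by omega⟩
  have hr := hstep r (hMa.trans har)
  have hj := hstep j (by omega)
  rcases lt_or_ge (r + 1) j with hrj | hjr
  · have hinc := hband (r + 1) j (by omega) hrj fun m ⟨hm₁, hm₂⟩ =>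
      ⟨(not_le.1 (hlast m (by omega) (by omega))).le, (ih m (by omega) (by omega)).le⟩
    linarith [hg (show β - s ≤ u j by linarith), hg (show u (r + 1) ≤ α + s by linarith)]
  · rcases (by omega : j = r ∨ j = r + 1) with rfl | rfl <;> linarith

/-- An escape above `2ε` is an upcrossing of `[ε, 2ε]`; an escape below `-2ε` is followed, at
the next return to `[-ε, ε]`, by an upcrossing of `[-2ε, -ε]`. -/
theorem eventually_abs_le_of_frequently {u : ℕ → ℝ} {g : ℝ → ℝ} (hg : Monotone g)
    {ε δ : ℝ} (hε : 0 < ε) (hstep : ∀ᶠ k in atTop, u (k + 1) ≤ u k + ε / 4)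
    (hband : ∀ᶠ i in atTop, ∀ j, i < j → (∀ m ∈ Icc i j, |u m| ≤ 2 * ε) →
      g (u j) - g (u i) ≤ δ)
    (hgap_pos : δ < g (7 * ε / 4) - g (5 * ε / 4))
    (hgap_neg : δ < g (-(5 * ε / 4)) - g (-(7 * ε / 4)))
    (hret : ∃ᶠ t in atTop, |u t| ≤ ε) : ∀ᶠ k in atTop, |u k| ≤ 2 * ε := by
  obtain ⟨M, hM⟩ := eventually_atTop.1 (hstep.and hband)
  have hstep' : ∀ k ≥ M, u (k + 1) ≤ u k + ε / 4 := fun k hk => (hM k hk).1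
  have hband' : ∀ {α β : ℝ}, -(2 * ε) ≤ α → β ≤ 2 * ε → ∀ i j, M ≤ i → i < j →
      (∀ m ∈ Icc i j, u m ∈ Icc α β) → g (u j) - g (u i) ≤ δ := fun hα hβ i j hi hij hm =>
    (hM i hi).2 j hij fun m hmij => abs_le.2 ⟨hα.trans (hm m hmij).1, (hm m hmij).2.trans hβ⟩
  obtain ⟨t₀, hu₀, ht₀⟩ := (hret.and_eventually (eventually_ge_atTop M)).exists
  refine eventually_atTop.2 ⟨t₀, fun k hk => abs_le.2 ⟨?_, ?_⟩⟩
  · by_contra! hlow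
    obtain ⟨t, hut, hkt⟩ := (hret.and_eventually (eventually_ge_atTop k)).exists
    have := lt_of_no_upcrossing hg (by positivity) (by linarith) hstep'
      (hband' (α := -(2 * ε)) (β := -ε) le_rfl (by linarith))
      (by convert hgap_neg using 3 <;> ring) (ht₀.trans hk) hlow.le t hkt
    linarith [abs_le.1 hut]
  · exact (lt_of_no_upcrossing hg (by positivity) (by linarith) hstep'
      (hband' (α := ε) (β := 2 * ε) (by linarith) le_rfl)
      (by convert hgap_pos using 3 <;> ring) ht₀ (abs_le.1 hu₀).2 k hk).le

theorem lipschitzOnWith_toNNReal_of_abs_sub_le {E : Type*} [SeminormedAddCommGroup E]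
    {X : Set E} {f : E → ℝ} {L : ℝ} (hf : ∀ a ∈ X, ∀ b ∈ X, |f a - f b| ≤ L * ‖a - b‖) :
    LipschitzOnWith L.toNNReal f X :=
  LipschitzOnWith.of_dist_le_mul fun a ha b hb => by
    rw [Real.dist_eq, dist_eq_norm]
    exact (hf a ha b hb).trans
      (mul_le_mul_of_nonneg_right (Real.le_coe_toNNReal L) (norm_nonneg _))

theorem LipschitzOnWith.tendsto_dist_succ {α β : Type*} [PseudoMetricSpace α]
    [PseudoMetricSpace β] {K : NNReal} {s : Set α} {f : α → β} (hf : LipschitzOnWith K f s)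
    {x : ℕ → α} (hx : ∀ k, x k ∈ s)
    (h : Tendsto (fun k => dist (x (k + 1)) (x k)) atTop (𝓝 0)) :
    Tendsto (fun k => dist (f (x (k + 1))) (f (x k))) atTop (𝓝 0) :=
  squeeze_zero (fun _ => dist_nonneg) (fun k => hf.dist_le_mul _ (hx _) _ (hx _))
    (by simpa using h.const_mul (K : ℝ))

theorem MapClusterPt.frequently_near {E : Type*} [PseudoMetricSpace E] {X : Set E}
    {x : ℕ → E} {a : E} {h : E → ℝ} {g : ℝ → ℝ} (hcl : MapClusterPt a atTop x)
    (hx : ∀ k, x k ∈ X) (hh : Tendsto h (𝓝[X] a) (𝓝 0)) (hg : Tendsto g (𝓝 0) (𝓝 0))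
    {r : ℝ} (hr : 0 < r) :
    ∃ᶠ t in atTop, (dist (x t) a < r ∧ |g (h (x t))| < r) ∧ |h (x t)| < r := by
  have hnear : ∀ᶠ z in 𝓝[X] a, (dist z a < r ∧ |g (h z)| < r) ∧ |h z| < r := by
    filter_upwards [eventually_nhdsWithin_of_eventually_nhds (Metric.ball_mem_nhds a hr),
      (hg.comp hh).eventually (Metric.ball_mem_nhds 0 hr),
      hh.eventually (Metric.ball_mem_nhds 0 hr)] with z h₁ h₂ h₃
    simp only [Function.comp, dist_zero_right, Real.norm_eq_abs] at h₂ h₃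
    exact ⟨⟨h₁, h₂⟩, h₃⟩
  exact (hcl.frequently (eventually_nhdsWithin_iff.1 hnear)).mono fun k hk => hk (hx k)

theorem tendsto_of_band_diam_le {E : Type*} [PseudoMetricSpace E] {x : ℕ → E} {a : E}
    {V : ℕ → ℝ} {B : ℕ → Prop} (hB : ∀ᶠ k in atTop, B k)
    (hband : ∀ δ > 0, ∀ᶠ i in atTop, ∀ j, i < j → (∀ m ∈ Icc i j, B m) →
      Metric.diam (x '' Icc i j) + (V j - V i) ≤ δ)
    (hret : ∀ r > 0, ∃ᶠ t in atTop, dist (x t) a < r ∧ |V t| < r) :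
    Tendsto x atTop (𝓝 a) := by
  refine Metric.tendsto_atTop.2 fun ρ hρ => ?_
  have hret' := hret (ρ / 4) (by positivity)
  obtain ⟨N, hN⟩ := eventually_atTop.1 (hB.and (hband (ρ / 4) (by positivity)))
  obtain ⟨t₀, hP₀, ht₀⟩ := (hret'.and_eventually (eventually_ge_atTop N)).exists
  refine ⟨t₀, fun k hk => ?_⟩
  obtain ⟨t, hP, hkt⟩ := (hret'.and_eventually (eventually_gt_atTop k)).exists
  have hdiam := (hN t₀ ht₀).2 t (hk.trans_lt hkt) fun m hm => (hN m (ht₀.trans hm.1)).1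
  calc dist (x k) a ≤ dist (x k) (x t₀) + dist (x t₀) a := dist_triangle _ _ _
    _ < ρ := by
      linarith [dist_le_diam_image_Icc x hk hkt.le, abs_lt.1 hP₀.2, abs_lt.1 hP.2]

theorem band_criterion_convergence_general {n : ℕ}
    (X : Set (EuclideanSpace ℝ (Fin n))) (hX : IsCompact X)
    (x : ℕ → EuclideanSpace ℝ (Fin n)) (hx : ∀ k, x k ∈ X)
    (hstep : Tendsto (fun k => ‖x (k + 1) - x k‖) atTop (nhds 0))
    (f : EuclideanSpace ℝ (Fin n) → ℝ) (L : ℝ)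
    (hf : ∀ a ∈ X, ∀ b ∈ X, |f a - f b| ≤ L * ‖a - b‖)
    (y θ₀ ε ς : ℝ) (hθ₀ : θ₀ ∈ Set.Ioo (0 : ℝ) 1) (hε : 0 < ε) (hς : 0 < ς)
    (Φ : EuclideanSpace ℝ (Fin n) → ℝ)
    (hΦ : ∀ z, Φ z = Real.sign (f z - y) * |f z - y| ^ (1 - θ₀))
    (hcluster : ∃ xstar, MapClusterPt xstar atTop x ∧ f xstar = y)
    (hband : ∀ δ > (0 : ℝ), ∃ K : ℕ, ∀ k₁ k₂ : ℕ, K ≤ k₁ → k₁ < k₂ →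
      (∀ m, k₁ ≤ m → m ≤ k₂ → |f (x m) - y| ≤ 2 * ε) →
      Metric.diam (x '' Set.Icc k₁ k₂) + ς * (Φ (x k₂) - Φ (x k₁)) ≤ δ) :
    ∃ p, Tendsto x atTop (nhds p) := by
  obtain ⟨xstar, hcl, hfy⟩ := hcluster
  set u : ℕ → ℝ := fun k => f (x k) - y
  set g : ℝ → ℝ := fun t => ς * signPow (1 - θ₀) t
  have he : 0 < 1 - θ₀ := sub_pos.2 hθ₀.2
  have hg : StrictMono g := (strictMono_signPow he).const_mul hς
  have hLip := lipschitzOnWith_toNNReal_of_abs_sub_le hf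
  have hxstar : xstar ∈ X :=
    hX.isClosed.closure_subset (hcl.mem_closure_of_mem X (mem_map.2 (univ_mem' hx)))
  have hret : ∀ r > 0, ∃ᶠ t in atTop, (dist (x t) xstar < r ∧ |g (u t)| < r) ∧ |u t| < r :=
    fun r hr => hcl.frequently_near (h := fun z => f z - y) hx
      (by simpa [hfy] using (hLip.continuousOn xstar hxstar).sub_const y)
      (by simpa using (tendsto_signPow_zero he).const_mul ς) hr
  have hband' : ∀ δ > 0, ∀ᶠ i in atTop, ∀ j, i < j → (∀ m ∈ Icc i j, |u m| ≤ 2 * ε) →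
      Metric.diam (x '' Icc i j) + (g (u j) - g (u i)) ≤ δ := fun δ hδ =>
    eventually_atTop.2 <| (hband δ hδ).imp fun K hK i hi j hij hm => by
      simpa only [hΦ, mul_sub, g, u, signPow] using
        hK i j hi hij fun m h₁ h₂ => hm m ⟨h₁, h₂⟩
  have hsmall : ∀ᶠ k in atTop, u (k + 1) ≤ u k + ε / 4 := by
    filter_upwards [(hLip.tendsto_dist_succ hx (by simpa [dist_eq_norm] using hstep)).eventually
      (gt_mem_nhds (by positivity : (0 : ℝ) < ε / 4))] with k hk
    linarith [le_abs_self (f (x (k + 1)) - f (x k)), Real.dist_eq (f (x (k + 1))) (f (x k))]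
  have hgap : 0 < g (7 * ε / 4) - g (5 * ε / 4) := sub_pos.2 (hg (by linarith))
  have hstay := eventually_abs_le_of_frequently hg.monotone hε hsmall
    ((hband' _ (half_pos hgap)).mono fun i h j hij hm =>
      (le_add_of_nonneg_left Metric.diam_nonneg).trans (h j hij hm))
    (half_lt_self hgap) (by simp only [g, signPow_neg]; linarith)
    ((hret ε hε).mono fun _ h => h.2.le)
  exact ⟨xstar, tendsto_of_band_diam_le hstay hband' fun r hr => (hret r hr).mono fun _ h => h.1⟩

/-- If a sequence with vanishing increments in a compact set has a
cluster point on the level set `{f = y}` and satisfies the band diameter criterion with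
the desingularized potential `Φ`, then it converges. -/
theorem band_criterion_convergence {n : ℕ}
    (X : Set (EuclideanSpace ℝ (Fin n))) (hX : IsCompact X)
    (x : ℕ → EuclideanSpace ℝ (Fin n)) (hx : ∀ k, x k ∈ X)
    (hstep : Tendsto (fun k => ‖x (k + 1) - x k‖) atTop (nhds 0))
    (f : EuclideanSpace ℝ (Fin n) → ℝ) (L : ℝ) (hL : 0 < L)
    (hf : ∀ a ∈ X, ∀ b ∈ X, |f a - f b| ≤ L * ‖a - b‖)
    (y θ₀ ε ς : ℝ) (hθ₀ : θ₀ ∈ Set.Ioo (0 : ℝ) 1) (hε : 0 < ε) (hς : 0 < ς)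
    (Φ : EuclideanSpace ℝ (Fin n) → ℝ)
    (hΦ : ∀ z, Φ z = Real.sign (f z - y) * |f z - y| ^ (1 - θ₀))
    (hcluster : ∃ xstar, MapClusterPt xstar atTop x ∧ f xstar = y)
    (hband : ∀ δ > (0 : ℝ), ∃ K : ℕ, ∀ k₁ k₂ : ℕ, K ≤ k₁ → k₁ < k₂ →
      (∀ m, k₁ ≤ m → m ≤ k₂ → |f (x m) - y| ≤ 2 * ε) →
      Metric.diam (x '' Set.Icc k₁ k₂) + ς * (Φ (x k₂) - Φ (x k₁)) ≤ δ) :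
    ∃ p, Tendsto x atTop (nhds p) :=
  band_criterion_convergence_general X hX x hx hstep f L hf y θ₀ ε ς hθ₀ hε hς Φ hΦ hcluster hband
end

section
/- Let H : ℝⁿ → Set ℝⁿ be a set-valued map, let c_b > 0 and ξ > 0, and let (x_k)_{k∈ℕ} ⊂ ℝⁿ, (α_k)_{k∈ℕ} ⊂ (0,∞), (e_k)_{k∈ℕ} ⊂ ℝⁿ, (u_k)_{k∈ℕ} ⊂ ℝⁿ satisfy u_k ∈ co H(B(x_k, c_b α_k^{ξ})) and x_{k+1} = x_k − α_k u_k + e_k for all k. Assume: (i) α_k → 0 and Σ_{k=0}^∞ α_k = ∞; (ii) Σ_{k=0}^∞ |e_k| < ∞; (iii) x_k → x*; (iv) H is outer semicontinuous at x* (whenever z_j → x*, h_j ∈ H(z_j), and h_j → h, one has h ∈ H(x*)); (v) H is locally bounded at x* (there exist r > 0 and M > 0 such that |h| ≤ M for every z ∈ B(x*, r) and h ∈ H(z)); and (vi) H(x*) is convex. Then 0 ∈ H(x*). -/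
/-!
If `0 ∉ H x*`, the closed convex set `H x*` is strictly separated from `0` by a linear
functional: `c < f` on `H x*` for some `c > 0`. Outer semicontinuity and local boundedness
make `H` upper semicontinuous at `x*`, so `c < f` on `H z` for all `z` near `x*`; as the
balls `B(x_k, c_b α_k^ξ)` shrink to `x*`, eventually `c < f (u_k)`. Then
`f x_{k+1} ≤ f x_k - c α_k + ‖f‖ ‖e_k‖`, and since `∑ α_k = ∞` while `∑ ‖e_k‖ < ∞`,
`f x_k → -∞`, contradicting `x_k → x*`.
-/

open Filter Topology Metric Finset

def OuterSemicontinuousAt {X Y : Type*} [TopologicalSpace X] [TopologicalSpace Y]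
    (H : X → Set Y) (x : X) : Prop :=
  ∀ (z : ℕ → X) (h : ℕ → Y) (l : Y),
    Tendsto z atTop (𝓝 x) → (∀ j, h j ∈ H (z j)) → Tendsto h atTop (𝓝 l) → l ∈ H x

namespace OuterSemicontinuousAt

variable {X Y : Type*} [TopologicalSpace X] {H : X → Set Y} {x : X}

theorem isClosed [TopologicalSpace Y] [SequentialSpace Y] (hH : OuterSemicontinuousAt H x) :
    IsClosed (H x) :=
  IsSeqClosed.isClosed fun _ _ hh hl => hH (fun _ => x) _ _ tendsto_const_nhds hh hl

theorem eventually_subset [FirstCountableTopology X] [PseudoMetricSpace Y] [ProperSpace Y]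
    (hH : OuterSemicontinuousAt H x) {B : Set Y} (hB : Bornology.IsBounded B)
    (hHB : ∀ᶠ z in 𝓝 x, H z ⊆ B) {U : Set Y} (hU : IsOpen U) (hxU : H x ⊆ U) :
    ∀ᶠ z in 𝓝 x, H z ⊆ U := by
  by_contra hnot
  obtain ⟨z, hz, hzU⟩ :=
    exists_seq_forall_of_frequently ((not_eventually.1 hnot).and_eventually hHB)
  choose h hhH hhU using fun n => Set.not_subset.1 (hzU n).1
  obtain ⟨a, -, ψ, hψ, ha⟩ := tendsto_subseq_of_bounded hB fun n => (hzU n).2 (hhH n)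
  have haH : a ∈ H x :=
    hH (z ∘ ψ) (h ∘ ψ) a (hz.comp hψ.tendsto_atTop) (fun n => hhH (ψ n)) ha
  exact hU.isClosed_compl.mem_of_tendsto ha (Eventually.of_forall fun n => hhU (ψ n)) (hxU haH)

end OuterSemicontinuousAt

theorem eventually_closedBall_subset_of_tendsto {ι X : Type*} [PseudoMetricSpace X]
    {l : Filter ι} {x : ι → X} {a : X} {ρ : ι → ℝ} (hx : Tendsto x l (𝓝 a))
    (hρ : Tendsto ρ l (𝓝 0)) {V : Set X} (hV : V ∈ 𝓝 a) :
    ∀ᶠ i in l, closedBall (x i) (ρ i) ⊆ V := by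
  obtain ⟨ε, hε, hball⟩ := Metric.mem_nhds_iff.1 hV
  filter_upwards [Metric.tendsto_nhds.1 hx (ε / 2) (half_pos hε),
    hρ.eventually (gt_mem_nhds (half_pos hε))] with i hxi hρi z hz
  exact hball (mem_ball.2 (by linarith [dist_triangle z (x i) a, mem_closedBall.1 hz]))

theorem tendsto_atBot_of_le_sub_mul_add {y α ε : ℕ → ℝ} {c : ℝ} (hc : 0 < c)
    (hdiv : Tendsto (fun N => ∑ k ∈ range N, α k) atTop atTop) (hε : Summable ε)
    (hstep : ∀ᶠ k in atTop, y (k + 1) ≤ y k - c * α k + ε k) :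
    Tendsto y atTop atBot := by
  obtain ⟨K, hK⟩ := eventually_atTop.1 hstep
  -- `w` is `y` with the accumulated decrease and errors added back; it is antitone from `K` on.
  set w : ℕ → ℝ := fun k => y k + c * ∑ i ∈ range k, α i - ∑ i ∈ range k, ε i
  have hw : ∀ k ≥ K, w k ≤ w K := by
    intro k hk
    induction k, hk using Nat.le_induction with
    | base => exact le_rfl
    | succ k hk ih =>
      simp only [w, sum_range_succ] at ih ⊢
      linarith [hK k hk]
  have hbound : Tendsto (fun k => -(c * ∑ i ∈ range k, α i) + (w K + ∑ i ∈ range k, ε i))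
      atTop atBot :=
    (tendsto_neg_atTop_atBot.comp (hdiv.const_mul_atTop hc)).atBot_add
      (tendsto_const_nhds.add hε.tendsto_sum_tsum_nat)
  refine tendsto_atBot_mono' _ ?_ hbound
  filter_upwards [eventually_ge_atTop K] with k hk
  linarith [hw k hk]

theorem tendsto_atBot_of_descent {E : Type*} [SeminormedAddCommGroup E]
    [NormedSpace ℝ E] (f : E →L[ℝ] ℝ) {x u e : ℕ → E} {α : ℕ → ℝ} {c : ℝ} (hc : 0 < c)
    (hα : ∀ k, 0 ≤ α k)
    (hrec : ∀ k, x (k + 1) = x k - α k • u k + e k)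
    (hdiv : Tendsto (fun N => ∑ k ∈ range N, α k) atTop atTop)
    (he : Summable fun k => ‖e k‖) (hfu : ∀ᶠ k in atTop, c < f (u k)) :
    Tendsto (fun k => f (x k)) atTop atBot := by
  refine tendsto_atBot_of_le_sub_mul_add hc hdiv (he.mul_left ‖f‖) ?_
  filter_upwards [hfu] with k hk
  rw [hrec, map_add, map_sub, map_smul, smul_eq_mul]
  linarith [(Real.le_norm_self _).trans (f.le_opNorm (e k)),
    mul_le_mul_of_nonneg_left hk.le (hα k)]

theorem inexact_limit_is_critical_general {n : ℕ}
    (H : EuclideanSpace ℝ (Fin n) → Set (EuclideanSpace ℝ (Fin n)))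
    (c_b ξ : ℝ) (hξ : 0 < ξ)
    (x u e : ℕ → EuclideanSpace ℝ (Fin n)) (α : ℕ → ℝ)
    (hαpos : ∀ k, 0 < α k)
    (hu : ∀ k, u k ∈ convexHull ℝ
      (⋃ z ∈ Metric.closedBall (x k) (c_b * α k ^ ξ), H z))
    (hrec : ∀ k, x (k + 1) = x k - α k • u k + e k)
    (hα0 : Tendsto α atTop (nhds 0))
    (hdiv : Tendsto (fun N => ∑ k ∈ Finset.range N, α k) atTop atTop)
    (he : Summable fun k => ‖e k‖)
    (xstar : EuclideanSpace ℝ (Fin n)) (hxlim : Tendsto x atTop (nhds xstar))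
    (hosc : ∀ (z h : ℕ → EuclideanSpace ℝ (Fin n)) (hl : EuclideanSpace ℝ (Fin n)),
      Tendsto z atTop (nhds xstar) → (∀ j, h j ∈ H (z j)) → Tendsto h atTop (nhds hl) →
      hl ∈ H xstar)
    (hlb : ∃ r > (0 : ℝ), ∃ M > (0 : ℝ), ∀ z ∈ Metric.closedBall xstar r, ∀ h ∈ H z,
      ‖h‖ ≤ M)
    (hconv : Convex ℝ (H xstar)) :
    (0 : EuclideanSpace ℝ (Fin n)) ∈ H xstar := by
  by_contra h0
  have hosc : OuterSemicontinuousAt H xstar := hosc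
  obtain ⟨r, hr, M, -, hbd⟩ := hlb
  obtain ⟨f, c, hfc, hsep⟩ := geometric_hahn_banach_point_closed hconv hosc.isClosed h0
  have hc : 0 < c := by simpa using hfc
  have hHf : ∀ᶠ z in 𝓝 xstar, H z ⊆ {w | c < f w} :=
    hosc.eventually_subset (isBounded_closedBall (x := 0) (r := M))
      (eventually_of_mem (closedBall_mem_nhds xstar hr) fun z hz h hh =>
        mem_closedBall_zero_iff.2 (hbd z hz h hh))
      (isOpen_lt continuous_const f.continuous) hsep
  have hρ : Tendsto (fun k => c_b * α k ^ ξ) atTop (𝓝 0) := by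
    simpa [Real.zero_rpow hξ.ne'] using (hα0.rpow_const (Or.inr hξ.le)).const_mul c_b
  have hfu : ∀ᶠ k in atTop, c < f (u k) := by
    filter_upwards [eventually_closedBall_subset_of_tendsto hxlim hρ hHf] with k hk
    have hsub : (⋃ z ∈ closedBall (x k) (c_b * α k ^ ξ), H z) ⊆ {w | c < f w} :=
      Set.iUnion₂_subset fun z hz => hk hz
    have hhalf : Convex ℝ {w | c < f w} := convex_halfSpace_gt ⟨map_add f, map_smul f⟩ c
    exact convexHull_min hsub hhalf (hu k)
  exact not_tendsto_nhds_of_tendsto_atBot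
    (tendsto_atBot_of_descent f hc (fun k => (hαpos k).le) hrec hdiv he hfu) _
    ((f.continuous.tendsto xstar).comp hxlim)

/-- If a bounded realization of the inexact subgradient-type method
with Goldstein enlargement converges to `x*`, where `H` is outer semicontinuous, locally
bounded, and convex-valued at `x*`, then `0 ∈ H(x*)`. -/
theorem inexact_limit_is_critical {n : ℕ}
    (H : EuclideanSpace ℝ (Fin n) → Set (EuclideanSpace ℝ (Fin n)))
    (c_b ξ : ℝ) (hcb : 0 < c_b) (hξ : 0 < ξ)
    (x u e : ℕ → EuclideanSpace ℝ (Fin n)) (α : ℕ → ℝ)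
    (hαpos : ∀ k, 0 < α k)
    (hu : ∀ k, u k ∈ convexHull ℝ
      (⋃ z ∈ Metric.closedBall (x k) (c_b * α k ^ ξ), H z))
    (hrec : ∀ k, x (k + 1) = x k - α k • u k + e k)
    (hα0 : Tendsto α atTop (nhds 0))
    (hdiv : Tendsto (fun N => ∑ k ∈ Finset.range N, α k) atTop atTop)
    (he : Summable fun k => ‖e k‖)
    (xstar : EuclideanSpace ℝ (Fin n)) (hxlim : Tendsto x atTop (nhds xstar))
    (hosc : ∀ (z h : ℕ → EuclideanSpace ℝ (Fin n)) (hl : EuclideanSpace ℝ (Fin n)),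
      Tendsto z atTop (nhds xstar) → (∀ j, h j ∈ H (z j)) → Tendsto h atTop (nhds hl) →
      hl ∈ H xstar)
    (hlb : ∃ r > (0 : ℝ), ∃ M > (0 : ℝ), ∀ z ∈ Metric.closedBall xstar r, ∀ h ∈ H z,
      ‖h‖ ≤ M)
    (hconv : Convex ℝ (H xstar)) :
    (0 : EuclideanSpace ℝ (Fin n)) ∈ H xstar :=
  inexact_limit_is_critical_general H c_b ξ hξ x u e α hαpos hu hrec hα0 hdiv he xstar hxlim hosc
    hlb hconv
end
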